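/- arXiv:1203.5990 — 10 statements merged into one kernel-verified Lean document; each statement's English description precedes it below -/
import Mathlib

section
/- Let E be a free R-module of rank n ≥ 1 with an (a,b)-module structure a such that a(E) ⊆ X • E (simple pole). Suppose there exist λ ∈ ℂ and an R-basis (e₀,…,e_{n−1}) of E such that for every j, a eⱼ − λ • (X • eⱼ) − X • eⱼ₊₁ ∈ X² • E (with the convention eₙ := 0). Then there exists an R-basis (ε₀,…,ε_{n−1}) of E satisfying exactly a εⱼ = λ • (X • εⱼ) + X • εⱼ₊₁ for every j (with εₙ := 0). -/
/-!
Write `a e = e A` with `A = X • (λ + N) + X² • Y`, where `N` is the constant nilpotent shift.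
For a change of basis `ε = e P` the Leibniz rule gives `a ε = e (A P + X² P')`, so it suffices to
find `P` with `P(0) = 1` and `X (P' + Y P) = P N - N P`. On the coefficient of `X^(k+1)` this
reads `(k + 1) P_{k+1} + [N, P_{k+1}] = -∑_{p+q=k} Y_p P_q`, and `T ↦ (k + 1) T + [N, T]` is
invertible since `ad N` is nilpotent; hence the `P_k` can be computed recursively.
-/

open PowerSeries Finset

namespace Matrix

variable {l m n R : Type*} [CommSemiring R]

theorem ext_coeff {A B : Matrix m n R⟦X⟧} (h : ∀ k, A.map (coeff k) = B.map (coeff k)) :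
    A = B := by
  ext i j k
  exact congrFun (congrFun (h k) i) j

theorem map_coeff_mul [Fintype m] (A : Matrix l m R⟦X⟧) (B : Matrix m n R⟦X⟧) (k : ℕ) :
    (A * B).map (coeff k) = ∑ p ∈ antidiagonal k, A.map (coeff p.1) * B.map (coeff p.2) := by
  ext i j
  simp only [map_apply, mul_apply, map_sum, coeff_mul, sum_apply]
  exact Finset.sum_comm

theorem map_coeff_mul_map_C [Fintype m] (A : Matrix l m R⟦X⟧) (B : Matrix m n R) (k : ℕ) :
    (A * B.map C).map (coeff k) = A.map (coeff k) * B := by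
  ext i j
  simp [mul_apply, coeff_mul_C]

theorem map_coeff_map_C_mul [Fintype m] (A : Matrix l m R) (B : Matrix m n R⟦X⟧) (k : ℕ) :
    (A.map C * B).map (coeff k) = A * B.map (coeff k) := by
  ext i j
  simp [mul_apply, coeff_C_mul]

theorem map_coeff_zero_X_smul (A : Matrix m n R⟦X⟧) : ((X : R⟦X⟧) • A).map (coeff 0) = 0 := by
  ext i j
  simp

theorem map_coeff_succ_X_smul (A : Matrix m n R⟦X⟧) (k : ℕ) :
    ((X : R⟦X⟧) • A).map (coeff (k + 1)) = A.map (coeff k) := by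
  ext i j
  simp [coeff_succ_X_mul]

theorem map_coeff_map_derivative (A : Matrix m n R⟦X⟧) (k : ℕ) :
    (A.map (derivative R)).map (coeff k) = (k + 1 : R) • A.map (coeff (k + 1)) := by
  ext i j
  simp [coeff_derivative, mul_comm]

theorem isUnit_det_of_map_constantCoeff_eq_one {R : Type*} [CommRing R] [Fintype m]
    [DecidableEq m] {A : Matrix m m R⟦X⟧} (hA : A.map constantCoeff = 1) : IsUnit A.det := by
  rw [isUnit_iff_constantCoeff, RingHom.map_det, RingHom.mapMatrix_apply, hA, det_one]
  exact isUnit_one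

end Matrix

section Shift

variable {R : Type*} [Semiring R] (n : ℕ)

def shiftMatrix : Matrix (Fin n) (Fin n) R :=
  Matrix.of fun i j => if (i : ℕ) = j + 1 then 1 else 0

theorem shiftMatrix_pow_apply (k : ℕ) (i j : Fin n) :
    (shiftMatrix n ^ k : Matrix (Fin n) (Fin n) R) i j = if (i : ℕ) = j + k then 1 else 0 := by
  induction k generalizing j with
  | zero => simp [Matrix.one_apply, Fin.ext_iff]
  | succ k ih =>
    rw [pow_succ, Matrix.mul_apply]
    simp_rw [ih]
    simp only [shiftMatrix, Matrix.of_apply, mul_ite, mul_one, mul_zero]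
    by_cases hj : (j : ℕ) + 1 < n
    · rw [Finset.sum_eq_single ⟨j + 1, hj⟩ (fun b _ hb => if_neg fun h => hb (Fin.ext h))
        (by simp), if_pos rfl, add_assoc, add_comm 1 k]
    · rw [Finset.sum_eq_zero fun b _ => if_neg (by omega), if_neg (by omega)]

theorem isNilpotent_shiftMatrix : IsNilpotent (shiftMatrix n : Matrix (Fin n) (Fin n) R) :=
  ⟨n, by ext i j; simp only [shiftMatrix_pow_apply, Matrix.zero_apply]; exact if_neg (by omega)⟩

theorem shiftMatrix_map {S : Type*} [Semiring S] (f : R →+* S) :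
    (shiftMatrix n : Matrix (Fin n) (Fin n) R).map f = shiftMatrix n := by
  ext i j
  simp [shiftMatrix, apply_ite f]

theorem sum_shiftMatrix_smul {M : Type*} [AddCommMonoid M] [Module R M] (v : Fin n → M)
    (j : Fin n) :
    ∑ i, (shiftMatrix n : Matrix (Fin n) (Fin n) R) i j • v i
      = if h : (j : ℕ) + 1 < n then v ⟨j + 1, h⟩ else 0 := by
  split_ifs with h
  · rw [Finset.sum_eq_single ⟨j + 1, h⟩ (fun i _ hi => by
      rw [shiftMatrix, Matrix.of_apply, if_neg fun h' => hi (Fin.ext h'), zero_smul]) (by simp)]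
    simp [shiftMatrix]
  · exact Finset.sum_eq_zero fun i _ => by
      rw [shiftMatrix, Matrix.of_apply, if_neg (by omega), zero_smul]

end Shift

theorem isUnit_smul_one_add_mulLeft_sub_mulRight {K A : Type*} [Field K] [Ring A] [Algebra K A]
    {c : K} (hc : c ≠ 0) {N : A} (hN : IsNilpotent N) :
    IsUnit (c • 1 + (LinearMap.mulLeft K N - LinearMap.mulRight K N)) :=
  ((LinearMap.commute_mulLeft_right N N).isNilpotent_sub
      ((LinearMap.isNilpotent_mulLeft_iff K N).2 hN)
      ((LinearMap.isNilpotent_mulRight_iff K N).2 hN)).isUnit_add_left_of_commute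
    ((isUnit_iff_ne_zero.2 hc).map (algebraMap K (Module.End K A)))
    (Algebra.commutes c _).symm

section Gauge

variable {K ι : Type*} [Field K] [Fintype ι] [DecidableEq ι]

/-- `Ring.inverse` is a genuine inverse here when `N` is nilpotent (see `gaugeCoeff_succ`). -/
noncomputable def gaugeCoeff (N : Matrix ι ι K) (Y : ℕ → Matrix ι ι K) : ℕ → Matrix ι ι K
  | 0 => 1
  | k + 1 => Ring.inverse ((k + 1 : K) • 1 + (LinearMap.mulLeft K N - LinearMap.mulRight K N))
      (-∑ q : Fin (k + 1), Y (k - q) * gaugeCoeff N Y q)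

theorem gaugeCoeff_succ [CharZero K] {N : Matrix ι ι K} (hN : IsNilpotent N)
    (Y : ℕ → Matrix ι ι K) (k : ℕ) :
    (k + 1 : K) • gaugeCoeff N Y (k + 1)
        + (N * gaugeCoeff N Y (k + 1) - gaugeCoeff N Y (k + 1) * N)
      = -∑ p ∈ antidiagonal k, Y p.1 * gaugeCoeff N Y p.2 := by
  set L : Module.End K (Matrix ι ι K) :=
    (k + 1 : K) • 1 + (LinearMap.mulLeft K N - LinearMap.mulRight K N)
  have hL : IsUnit L :=
    isUnit_smul_one_add_mulLeft_sub_mulRight (Nat.cast_add_one_ne_zero (R := K) k) hN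
  change L (gaugeCoeff N Y (k + 1)) = _
  rw [gaugeCoeff, ← Module.End.mul_apply, Ring.mul_inverse_cancel _ hL, Module.End.one_apply,
    Fin.sum_univ_eq_sum_range (fun q => Y (k - q) * gaugeCoeff N Y q),
    ← Finset.Nat.sum_antidiagonal_eq_sum_range_succ (fun p q => Y q * gaugeCoeff N Y p),
    ← Finset.Nat.sum_antidiagonal_swap]
  rfl

noncomputable def gaugeMatrix (N : Matrix ι ι K) (Y : Matrix ι ι K⟦X⟧) : Matrix ι ι K⟦X⟧ :=
  Matrix.of fun i j => mk fun k => gaugeCoeff N (fun p => Y.map (coeff p)) k i j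

theorem map_coeff_gaugeMatrix (N : Matrix ι ι K) (Y : Matrix ι ι K⟦X⟧) (k : ℕ) :
    (gaugeMatrix N Y).map (coeff k) = gaugeCoeff N (fun p => Y.map (coeff p)) k := by
  ext i j
  simp [gaugeMatrix]

theorem gaugeMatrix_map_constantCoeff (N : Matrix ι ι K) (Y : Matrix ι ι K⟦X⟧) :
    (gaugeMatrix N Y).map constantCoeff = 1 := by
  rw [← coeff_zero_eq_constantCoeff (R := K), map_coeff_gaugeMatrix, gaugeCoeff]

theorem X_smul_derivative_gaugeMatrix_add [CharZero K] {N : Matrix ι ι K} (hN : IsNilpotent N)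
    (Y : Matrix ι ι K⟦X⟧) :
    (X : K⟦X⟧) • ((gaugeMatrix N Y).map (derivative K) + Y * gaugeMatrix N Y)
      = gaugeMatrix N Y * N.map C - N.map C * gaugeMatrix N Y := by
  apply Matrix.ext_coeff
  rintro (_ | k)
  · rw [Matrix.map_coeff_zero_X_smul, Matrix.map_sub _ (map_sub _), Matrix.map_coeff_mul_map_C,
      Matrix.map_coeff_map_C_mul, map_coeff_gaugeMatrix, gaugeCoeff, one_mul, mul_one, sub_self]
  · rw [Matrix.map_coeff_succ_X_smul, Matrix.map_add _ (map_add _), Matrix.map_sub _ (map_sub _),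
      Matrix.map_coeff_mul_map_C, Matrix.map_coeff_map_C_mul, Matrix.map_coeff_map_derivative,
      Matrix.map_coeff_mul]
    simp only [map_coeff_gaugeMatrix]
    linear_combination (norm := module) gaugeCoeff_succ hN (fun p => Y.map (coeff p)) k

end Gauge

section Module

variable {K E ι : Type*} [AddCommGroup E] [Fintype ι] [DecidableEq ι]

theorem apply_toLin_self_of_leibniz [CommRing K] [Module K E] [Module K⟦X⟧ E] (a : E →ₗ[K] E)
    (ha : ∀ (S : K⟦X⟧) (x : E), a (S • x) = S • a x + ((X : K⟦X⟧) ^ 2 * derivative K S) • x)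
    (e : Module.Basis ι K⟦X⟧ E) {A : Matrix ι ι K⟦X⟧}
    (hA : ∀ j, a (e j) = Matrix.toLin e e A (e j)) (P : Matrix ι ι K⟦X⟧) (j : ι) :
    a (Matrix.toLin e e P (e j))
      = Matrix.toLin e e (A * P + (X : K⟦X⟧) ^ 2 • P.map (derivative K)) (e j) := by
  rw [map_add, LinearMap.add_apply, Matrix.toLin_mul e e e, LinearMap.comp_apply, map_smul,
    LinearMap.smul_apply, Matrix.toLin_self e e P, Matrix.toLin_self e e (P.map (derivative K)),
    map_sum, map_sum, Finset.smul_sum, ← Finset.sum_add_distrib]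
  refine Finset.sum_congr rfl fun i _ => ?_
  rw [ha, hA, map_smul, Matrix.map_apply, smul_smul]

theorem exists_basis_apply_eq_toLin_of_isNilpotent [Field K] [CharZero K] [Module K E]
    [Module K⟦X⟧ E] (a : E →ₗ[K] E)
    (ha : ∀ (S : K⟦X⟧) (x : E), a (S • x) = S • a x + ((X : K⟦X⟧) ^ 2 * derivative K S) • x)
    (e : Module.Basis ι K⟦X⟧ E) (c : K) {N : Matrix ι ι K} (hN : IsNilpotent N)
    (Y : Matrix ι ι K⟦X⟧)
    (he : ∀ j, a (e j) = Matrix.toLin e e ((X : K⟦X⟧) • (c • 1 + N.map C) + (X : K⟦X⟧) ^ 2 • Y) (e j)) :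
    ∃ ε : Module.Basis ι K⟦X⟧ E, ∀ j,
      a (ε j) = Matrix.toLin ε ε ((X : K⟦X⟧) • (c • 1 + N.map C)) (ε j) := by
  set P := gaugeMatrix N Y
  set B : Matrix ι ι K⟦X⟧ := (X : K⟦X⟧) • (c • 1 + N.map C)
  have hgauge := X_smul_derivative_gaugeMatrix_add hN Y
  have hP : (B + (X : K⟦X⟧) ^ 2 • Y) * P + (X : K⟦X⟧) ^ 2 • P.map (derivative K) = P * B := by
    have hX2 : (X : K⟦X⟧) • (X : K⟦X⟧) • (Y * P) + (X : K⟦X⟧) • (X : K⟦X⟧) • P.map (derivative K)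
        = (X : K⟦X⟧) • (P * N.map C - N.map C * P) := by
      rw [← hgauge, smul_add _ (P.map _), smul_add, add_comm]
    simp only [B, add_mul, mul_add, Matrix.smul_mul, Matrix.mul_smul, Matrix.one_mul,
      Matrix.mul_one]
    rw [pow_two, mul_smul, mul_smul, add_assoc, hX2, ← smul_add]
    congr 1
    abel
  refine ⟨e.map (Matrix.toLinearEquiv e P
    (Matrix.isUnit_det_of_map_constantCoeff_eq_one (gaugeMatrix_map_constantCoeff N Y))), ?_⟩
  intro j
  rw [Matrix.toLin_self]
  simp only [Module.Basis.map_apply, Matrix.toLinearEquiv_apply]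
  rw [apply_toLin_self_of_leibniz a ha e he, hP, Matrix.toLin_mul e e e, LinearMap.comp_apply,
    Matrix.toLin_self e e B, map_sum]
  simp only [map_smul]

theorem sum_X_smul_smul_one_add_shiftMatrix_smul [CommRing K] [Module K E] [Module K⟦X⟧ E]
    [IsScalarTower K K⟦X⟧ E] {n : ℕ} (c : K) (v : Fin n → E) (j : Fin n) :
    ∑ i, ((X : K⟦X⟧) • (c • 1 + shiftMatrix n) : Matrix (Fin n) (Fin n) K⟦X⟧) i j • v i
      = c • (X : K⟦X⟧) • v j
        + (X : K⟦X⟧) • (if h : (j : ℕ) + 1 < n then v ⟨j + 1, h⟩ else 0) := by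
  simp only [Matrix.smul_apply, Matrix.add_apply, smul_eq_mul, mul_smul, add_smul, smul_add,
    Finset.sum_add_distrib, ← Finset.smul_sum, sum_shiftMatrix_smul, Matrix.one_apply, smul_ite,
    ite_smul, smul_zero, zero_smul, smul_one_smul, Finset.sum_ite_eq', Finset.mem_univ, if_true]
  rw [smul_comm]

end Module

theorem stmt1_general (n : ℕ)
    (E : Type*) [AddCommGroup E] [Module ℂ E] [Module (PowerSeries ℂ) E]
    [IsScalarTower ℂ (PowerSeries ℂ) E]
    (a : E →ₗ[ℂ] E)
    (ha : ∀ (S : PowerSeries ℂ) (x : E),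
      a (S • x) = S • a x + ((X : PowerSeries ℂ) ^ 2 * derivative ℂ S) • x)
    (lam : ℂ) (e : Module.Basis (Fin n) (PowerSeries ℂ) E)
    (he : ∀ j : Fin n, ∃ y : E,
      a (e j) - lam • ((X : PowerSeries ℂ) • e j)
        - (X : PowerSeries ℂ) •
            (if h : (j : ℕ) + 1 < n then e ⟨(j : ℕ) + 1, h⟩ else 0)
        = ((X : PowerSeries ℂ) ^ 2) • y) :
    ∃ ε : Module.Basis (Fin n) (PowerSeries ℂ) E, ∀ j : Fin n,
      a (ε j) = lam • ((X : PowerSeries ℂ) • ε j)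
        + (X : PowerSeries ℂ) •
            (if h : (j : ℕ) + 1 < n then ε ⟨(j : ℕ) + 1, h⟩ else 0) := by
  choose y hy using he
  set Y : Matrix (Fin n) (Fin n) ℂ⟦X⟧ := Matrix.of fun i j => e.repr (y j) i
  have hshift : (shiftMatrix n : Matrix (Fin n) (Fin n) ℂ).map C = shiftMatrix n :=
    shiftMatrix_map n C
  obtain ⟨ε, hε⟩ := exists_basis_apply_eq_toLin_of_isNilpotent a ha e lam
    (isNilpotent_shiftMatrix n) Y fun j => by
      have hY : ∑ i, ((X : ℂ⟦X⟧) ^ 2 • Y) i j • e i = (X : ℂ⟦X⟧) ^ 2 • y j := by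
        simp only [Matrix.smul_apply, smul_eq_mul, mul_smul, ← Finset.smul_sum]
        rw [← e.sum_repr (y j)]
        rfl
      rw [hshift, Matrix.toLin_self]
      simp only [Matrix.add_apply, add_smul, Finset.sum_add_distrib,
        sum_X_smul_smul_one_add_shiftMatrix_smul, hY, ← hy j]
      abel
  refine ⟨ε, fun j => ?_⟩
  rw [hε, hshift, Matrix.toLin_self, sum_X_smul_smul_one_add_shiftMatrix_smul]

/-- Let `E` be a free `ℂ⟦X⟧`-module of rank `n ≥ 1` with an
(a,b)-module structure `a` having a simple pole (`a E ⊆ X • E`).  If there are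
`λ ∈ ℂ` and a basis `(e₀, …, e_{n-1})` such that
`a eⱼ - λ • (X • eⱼ) - X • eⱼ₊₁ ∈ X² • E` (with `eₙ := 0`), then there is a
basis `(ε₀, …, ε_{n-1})` with exactly `a εⱼ = λ • (X • εⱼ) + X • εⱼ₊₁`. -/
theorem stmt1 (n : ℕ) (hn : 1 ≤ n)
    (E : Type*) [AddCommGroup E] [Module ℂ E] [Module (PowerSeries ℂ) E]
    [IsScalarTower ℂ (PowerSeries ℂ) E]
    (a : E →ₗ[ℂ] E)
    (ha : ∀ (S : PowerSeries ℂ) (x : E),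
      a (S • x) = S • a x + ((X : PowerSeries ℂ) ^ 2 * derivative ℂ S) • x)
    (hsp : ∀ x : E, ∃ y : E, a x = (X : PowerSeries ℂ) • y)
    (lam : ℂ) (e : Module.Basis (Fin n) (PowerSeries ℂ) E)
    (he : ∀ j : Fin n, ∃ y : E,
      a (e j) - lam • ((X : PowerSeries ℂ) • e j)
        - (X : PowerSeries ℂ) •
            (if h : (j : ℕ) + 1 < n then e ⟨(j : ℕ) + 1, h⟩ else 0)
        = ((X : PowerSeries ℂ) ^ 2) • y) :
    ∃ ε : Module.Basis (Fin n) (PowerSeries ℂ) E, ∀ j : Fin n,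
      a (ε j) = lam • ((X : PowerSeries ℂ) • ε j)
        + (X : PowerSeries ℂ) •
            (if h : (j : ℕ) + 1 < n then ε ⟨(j : ℕ) + 1, h⟩ else 0) :=
  stmt1_general n E a ha lam e he
end

section
/- Let λ₁ ∈ ℚ with λ₁ > 1, let p₁ ∈ ℕ with p₁ ≥ 1, and set λ₂ := λ₁ + p₁ − 1. Let E and F be rank-2 (a,b)-modules with R-bases (e₁,e₂) and (f₁,f₂) satisfying a e₁ = λ₁ • (X • e₁), a e₂ = λ₂ • (X • e₂) + S • e₁ and a f₁ = λ₁ • (X • f₁), a f₂ = λ₂ • (X • f₂) + T • f₁, where S, T ∈ ℂ⟦X⟧ have constant term 1. If there exists an R-linear isomorphism φ : E ≃ F with φ ∘ a_E = a_F ∘ φ, then the coefficient of X^{p₁} in S equals the coefficient of X^{p₁} in T (the parameter of a rank-2 fresco is an isomorphism invariant). -/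
/-!
Write `φ e₀ = α f₀ + β f₁` and `φ e₁ = γ f₀ + δ f₁`. Because `a (u • x) = u • a x + X² u′ • x`,
commuting with `a` turns into first-order equations in the operator `X² d/dX`, which sends `Xⁿ`
to `n Xⁿ⁺¹`. The equation for `β` reads `X² β′ + (λ₂ - λ₁) X β = 0`; as `λ₂ - λ₁ = p₁ - 1` is a
natural number and `β(0) = 0` (from `T(0) = 1`), it forces `β = 0`. Then `α` and `δ` are constants,
equal to the same `c` because `S(0) = T(0) = 1`. In the coefficient of `X^p₁` of the equation for
`γ` the two `γ`-terms are both `(p₁ - 1) γₚ₁₋₁` and cancel, leaving `c Sₚ₁ = c Tₚ₁`; finally `c ≠ 0`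
since `φ` is injective.
-/

open PowerSeries

/-- `a` is an (a,b)-module structure on the `ℂ⟦X⟧`-module `E`:
`a (S • x) = S • a x + (X² * S′) • x`. -/
def IsABStructure (E : Type*) [AddCommGroup E] [Module ℂ E]
    [Module (PowerSeries ℂ) E] [IsScalarTower ℂ (PowerSeries ℂ) E]
    (a : E →ₗ[ℂ] E) : Prop :=
  ∀ (S : PowerSeries ℂ) (x : E),
    a (S • x) = S • a x + ((X : PowerSeries ℂ) ^ 2 * derivative ℂ S) • x

namespace PowerSeries

variable {R : Type*}

theorem coeff_succ_X_sq_mul_derivative [CommSemiring R] (g : R⟦X⟧) (n : ℕ) :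
    coeff (n + 1) (X ^ 2 * d⁄dX R g) = n * coeff n g := by
  rcases n with _ | n
  · simp [coeff_X_pow_mul']
  · rw [show n + 1 + 1 = n + 2 from rfl, coeff_X_pow_mul, coeff_derivative]
    push_cast
    ring

variable [CommRing R] [IsDomain R] [CharZero R]

theorem eq_C_of_X_sq_mul_derivative_eq_zero {g : R⟦X⟧} (h : X ^ 2 * d⁄dX R g = 0) :
    g = C (constantCoeff g) :=
  derivative.ext (by simpa using h) (by simp)

theorem eq_zero_of_X_sq_mul_derivative_add_eq_zero (k : ℕ) {g : R⟦X⟧}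
    (h₀ : constantCoeff g = 0) (h : X ^ 2 * d⁄dX R g + C (k : R) * X * g = 0) : g = 0 := by
  ext n
  rcases n with _ | n
  · simpa using h₀
  · have hn := congrArg (coeff (n + 1 + 1)) h
    rw [map_add, coeff_succ_X_sq_mul_derivative, mul_assoc, coeff_C_mul, coeff_succ_X_mul,
      map_zero, ← add_mul] at hn
    have hnk : ((n + 1 + k : ℕ) : R) ≠ 0 := Nat.cast_ne_zero.2 (by omega)
    push_cast at hnk
    simpa [hnk] using hn

end PowerSeries

section StandardBasis

variable {E : Type*} [AddCommGroup E] [Module ℂ E] [Module ℂ⟦X⟧ E] [IsScalarTower ℂ ℂ⟦X⟧ E]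

def IsStandardBasis (a : E →ₗ[ℂ] E) (e : Module.Basis (Fin 2) ℂ⟦X⟧ E) (l₁ l₂ : ℂ)
    (S : ℂ⟦X⟧) : Prop :=
  a (e 0) = l₁ • (X : ℂ⟦X⟧) • e 0 ∧ a (e 1) = l₂ • (X : ℂ⟦X⟧) • e 1 + S • e 0

theorem smul_X_smul (c : ℂ) (x : E) : c • (X : ℂ⟦X⟧) • x = (C c * X) • x := by
  rw [← smul_assoc, smul_eq_C_mul]

variable {a : E →ₗ[ℂ] E} {e : Module.Basis (Fin 2) ℂ⟦X⟧ E} {l₁ l₂ : ℂ} {S : ℂ⟦X⟧}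

namespace IsStandardBasis

theorem apply_eq (ha : IsABStructure E a) (he : IsStandardBasis a e l₁ l₂ S) (x : E) :
    a x = (C l₁ * X * e.repr x 0 + X ^ 2 * d⁄dX ℂ (e.repr x 0) + S * e.repr x 1) • e 0
      + (C l₂ * X * e.repr x 1 + X ^ 2 * d⁄dX ℂ (e.repr x 1)) • e 1 := by
  conv_lhs => rw [← e.sum_repr x, Fin.sum_univ_two]
  rw [map_add, ha, ha, he.1, he.2, smul_X_smul, smul_X_smul]
  simp only [smul_add, add_smul, smul_smul]
  ring_nf
  abel

theorem repr_apply_zero (ha : IsABStructure E a) (he : IsStandardBasis a e l₁ l₂ S) (x : E) :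
    e.repr (a x) 0 = C l₁ * X * e.repr x 0 + X ^ 2 * d⁄dX ℂ (e.repr x 0) + S * e.repr x 1 := by
  rw [he.apply_eq ha]
  simp

theorem repr_apply_one (ha : IsABStructure E a) (he : IsStandardBasis a e l₁ l₂ S) (x : E) :
    e.repr (a x) 1 = C l₂ * X * e.repr x 1 + X ^ 2 * d⁄dX ℂ (e.repr x 1) := by
  rw [he.apply_eq ha]
  simp

end IsStandardBasis

end StandardBasis

section Intertwining

variable {E : Type*} [AddCommGroup E] [Module ℂ E] [Module ℂ⟦X⟧ E] [IsScalarTower ℂ ℂ⟦X⟧ E]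
  {F : Type*} [AddCommGroup F] [Module ℂ F] [Module ℂ⟦X⟧ F] [IsScalarTower ℂ ℂ⟦X⟧ F]
  {aE : E →ₗ[ℂ] E} {aF : F →ₗ[ℂ] F} {e : Module.Basis (Fin 2) ℂ⟦X⟧ E}
  {f : Module.Basis (Fin 2) ℂ⟦X⟧ F} {l₁ l₂ : ℂ} {S T : ℂ⟦X⟧} {φ : E →ₗ[ℂ⟦X⟧] F}

namespace IsStandardBasis

theorem intertwining_basis_zero (haF : IsABStructure F aF) (he : IsStandardBasis aE e l₁ l₂ S)
    (hf : IsStandardBasis aF f l₁ l₂ T) (hφ : ∀ x, φ (aE x) = aF (φ x)) :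
    X ^ 2 * d⁄dX ℂ (f.repr (φ (e 0)) 0) + T * f.repr (φ (e 0)) 1 = 0 ∧
      X ^ 2 * d⁄dX ℂ (f.repr (φ (e 0)) 1) + C (l₂ - l₁) * X * f.repr (φ (e 0)) 1 = 0 := by
  have h := congrArg f.repr (hφ (e 0))
  rw [he.1, smul_X_smul, map_smul, map_smul] at h
  have h₀ := congrArg (· 0) h
  have h₁ := congrArg (· 1) h
  simp only [Finsupp.smul_apply, smul_eq_mul, hf.repr_apply_zero haF,
    hf.repr_apply_one haF] at h₀ h₁
  constructor
  · linear_combination -h₀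
  · rw [map_sub]; linear_combination -h₁

theorem intertwining_basis_one (haF : IsABStructure F aF) (he : IsStandardBasis aE e l₁ l₂ S)
    (hf : IsStandardBasis aF f l₁ l₂ T) (hφ : ∀ x, φ (aE x) = aF (φ x)) :
    C (l₂ - l₁) * X * f.repr (φ (e 1)) 0 + S * f.repr (φ (e 0)) 0
        = X ^ 2 * d⁄dX ℂ (f.repr (φ (e 1)) 0) + T * f.repr (φ (e 1)) 1 ∧
      X ^ 2 * d⁄dX ℂ (f.repr (φ (e 1)) 1) = S * f.repr (φ (e 0)) 1 := by
  have h := congrArg f.repr (hφ (e 1))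
  rw [he.2, smul_X_smul, map_add, map_smul, map_smul, map_add, map_smul, map_smul] at h
  have h₀ := congrArg (· 0) h
  have h₁ := congrArg (· 1) h
  simp only [Finsupp.add_apply, Finsupp.smul_apply, smul_eq_mul, hf.repr_apply_zero haF,
    hf.repr_apply_one haF] at h₀ h₁
  constructor
  · rw [map_sub]; linear_combination h₀
  · linear_combination -h₁

theorem repr_map_zero_one_eq_zero (k : ℕ) (haF : IsABStructure F aF)
    (he : IsStandardBasis aE e l₁ (l₁ + k) S) (hf : IsStandardBasis aF f l₁ (l₁ + k) T)
    (hT : constantCoeff T = 1) (hφ : ∀ x, φ (aE x) = aF (φ x)) :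
    f.repr (φ (e 0)) 1 = 0 := by
  obtain ⟨h₀, h₁⟩ := intertwining_basis_zero haF he hf hφ
  refine eq_zero_of_X_sq_mul_derivative_add_eq_zero k ?_ (by simpa using h₁)
  simpa [hT] using congrArg constantCoeff h₀

theorem exists_map_zero_eq_C_smul_and_coeff_eq (k : ℕ) (haF : IsABStructure F aF)
    (he : IsStandardBasis aE e l₁ (l₁ + k) S) (hf : IsStandardBasis aF f l₁ (l₁ + k) T)
    (hS : constantCoeff S = 1) (hT : constantCoeff T = 1) (hφ : ∀ x, φ (aE x) = aF (φ x)) :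
    ∃ c : ℂ, φ (e 0) = C c • f 0 ∧ c * coeff (k + 1) S = c * coeff (k + 1) T := by
  have h₁₀ := repr_map_zero_one_eq_zero k haF he hf hT hφ
  obtain ⟨h₀₀, -⟩ := intertwining_basis_zero haF he hf hφ
  obtain ⟨h₀₁, h₁₁⟩ := intertwining_basis_one haF he hf hφ
  rw [h₁₀, mul_zero, add_zero] at h₀₀
  rw [h₁₀, mul_zero] at h₁₁
  have hα := eq_C_of_X_sq_mul_derivative_eq_zero h₀₀
  have hδ := eq_C_of_X_sq_mul_derivative_eq_zero h₁₁
  refine ⟨constantCoeff (f.repr (φ (e 0)) 0), ?_, ?_⟩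
  · rw [← hα, ← f.sum_repr (φ (e 0)), Fin.sum_univ_two, h₁₀, zero_smul, add_zero]
    simp
  set c := constantCoeff (f.repr (φ (e 0)) 0)
  set d := constantCoeff (f.repr (φ (e 1)) 1)
  rw [hα, hδ] at h₀₁
  have hcd : c = d := by simpa [hS, hT] using congrArg constantCoeff h₀₁
  have hk := congrArg (coeff (k + 1)) h₀₁
  rw [map_add, map_add, mul_assoc, coeff_C_mul, coeff_succ_X_mul,
    coeff_succ_X_sq_mul_derivative, coeff_mul_C, coeff_mul_C] at hk
  linear_combination hk - coeff (k + 1) T * hcd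

end IsStandardBasis

end Intertwining

theorem stmt4_general (lam1 : ℚ) (p1 : ℕ) (hp1 : 1 ≤ p1)
    (lam2 : ℚ) (hlam2 : lam2 = lam1 + p1 - 1)
    (E : Type*) [AddCommGroup E] [Module ℂ E]
    [Module (PowerSeries ℂ) E] [IsScalarTower ℂ (PowerSeries ℂ) E]
    (F : Type*) [AddCommGroup F] [Module ℂ F]
    [Module (PowerSeries ℂ) F] [IsScalarTower ℂ (PowerSeries ℂ) F]
    (aE : E →ₗ[ℂ] E) (aF : F →ₗ[ℂ] F)
    (haF : IsABStructure F aF)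
    (S T : PowerSeries ℂ)
    (hS : constantCoeff S = 1) (hT : constantCoeff T = 1)
    (e : Module.Basis (Fin 2) (PowerSeries ℂ) E) (f : Module.Basis (Fin 2) (PowerSeries ℂ) F)
    (he1 : aE (e 0) = (lam1 : ℂ) • ((X : PowerSeries ℂ) • e 0))
    (he2 : aE (e 1) = (lam2 : ℂ) • ((X : PowerSeries ℂ) • e 1) + S • e 0)
    (hf1 : aF (f 0) = (lam1 : ℂ) • ((X : PowerSeries ℂ) • f 0))
    (hf2 : aF (f 1) = (lam2 : ℂ) • ((X : PowerSeries ℂ) • f 1) + T • f 0)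
    (φ : E ≃ₗ[PowerSeries ℂ] F) (hφ : ∀ x : E, φ (aE x) = aF (φ x)) :
    coeff p1 S = coeff p1 T := by
  obtain ⟨k, rfl⟩ : ∃ k, p1 = k + 1 := ⟨p1 - 1, by omega⟩
  have hlam : (lam2 : ℂ) = lam1 + k := by rw [hlam2]; push_cast; ring
  have he : IsStandardBasis aE e lam1 (lam1 + k) S := hlam ▸ ⟨he1, he2⟩
  have hf : IsStandardBasis aF f lam1 (lam1 + k) T := hlam ▸ ⟨hf1, hf2⟩
  obtain ⟨c, hφe, hcoeff⟩ :=
    he.exists_map_zero_eq_C_smul_and_coeff_eq (φ := φ.toLinearMap) k haF hf hS hT hφ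
  have hc : c ≠ 0 := by
    rintro rfl
    simp only [map_zero, zero_smul, LinearEquiv.coe_coe, LinearEquiv.map_eq_zero_iff] at hφe
    exact e.ne_zero 0 hφe
  exact mul_left_cancel₀ hc hcoeff

/-- For rank-2 frescos `a e₁ = λ₁ • (X • e₁)`,
`a e₂ = λ₂ • (X • e₂) + S • e₁` (with `λ₂ = λ₁ + p₁ - 1`, `S(0) = 1`), the
coefficient of `X^{p₁}` in `S` (the parameter) is an isomorphism invariant. -/
theorem stmt4 (lam1 : ℚ) (hlam1 : 1 < lam1) (p1 : ℕ) (hp1 : 1 ≤ p1)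
    (lam2 : ℚ) (hlam2 : lam2 = lam1 + p1 - 1)
    (E : Type*) [AddCommGroup E] [Module ℂ E]
    [Module (PowerSeries ℂ) E] [IsScalarTower ℂ (PowerSeries ℂ) E]
    (F : Type*) [AddCommGroup F] [Module ℂ F]
    [Module (PowerSeries ℂ) F] [IsScalarTower ℂ (PowerSeries ℂ) F]
    (aE : E →ₗ[ℂ] E) (aF : F →ₗ[ℂ] F)
    (haE : IsABStructure E aE) (haF : IsABStructure F aF)
    (S T : PowerSeries ℂ)
    (hS : constantCoeff S = 1) (hT : constantCoeff T = 1)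
    (e : Module.Basis (Fin 2) (PowerSeries ℂ) E) (f : Module.Basis (Fin 2) (PowerSeries ℂ) F)
    (he1 : aE (e 0) = (lam1 : ℂ) • ((X : PowerSeries ℂ) • e 0))
    (he2 : aE (e 1) = (lam2 : ℂ) • ((X : PowerSeries ℂ) • e 1) + S • e 0)
    (hf1 : aF (f 0) = (lam1 : ℂ) • ((X : PowerSeries ℂ) • f 0))
    (hf2 : aF (f 1) = (lam2 : ℂ) • ((X : PowerSeries ℂ) • f 1) + T • f 0)
    (φ : E ≃ₗ[PowerSeries ℂ] F) (hφ : ∀ x : E, φ (aE x) = aF (φ x)) :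
    coeff p1 S = coeff p1 T :=
  stmt4_general lam1 p1 hp1 lam2 hlam2 E F aE aF haF S T hS hT e f he1 he2 hf1 hf2 φ hφ
end

section
/- Let λ₁, λ₂, λ₃ ∈ ℚ with λ₂ − λ₁ ∉ ℤ and λ₃ − λ₁ ∉ ℤ. Let E be a rank-3 (a,b)-module presented by (λ₁,λ₂,λ₃; S₁,S₂), where S₁, S₂ ∈ ℂ⟦X⟧ have constant term 1. Set γ := coeff₁ S₁. Then E also admits a presentation (λ₁,λ₂,λ₃; 1 + γ·X, S₂): there exists an R-basis (ε₁,ε₂,ε₃) of E with a ε₁ = λ₁ • (X • ε₁), a ε₂ = λ₂ • (X • ε₂) + (1 + γ·X) • ε₁, and a ε₃ = λ₃ • (X • ε₃) + S₂ • ε₂. -/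
/-!
Keep `e₁` and replace `e₂, e₃` by `e₂ + W • e₁, e₃ + V • e₁`.
Since `a (W • e₁) = λ₁ X W e₁ + X² W′ e₁`, the new basis has the required shape as soon as
`X² W′ + (λ₁ - λ₂) X W = 1 + γ X - S₁` and `X² V′ + (λ₁ - λ₃) X V = S₂ W`.
An equation `X² W′ + μ X W = F` with `F(0) = 0` is solved coefficientwise, `(n + μ) wₙ = f_{n+1}`,
which is possible because `μ ∉ -ℕ`; the choice of `γ` makes `w₀ = 0`, so that `S₂ W` vanishes
at `0`.
-/

open PowerSeries

/-- The rank-3 (a,b)-module `(E, a)` is presented by `(λ₁, λ₂, λ₃; S₁, S₂)` :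
there is a `ℂ⟦X⟧`-basis `(e₁,e₂,e₃)` with `a e₁ = λ₁ • (X • e₁)`,
`a e₂ = λ₂ • (X • e₂) + S₁ • e₁` and `a e₃ = λ₃ • (X • e₃) + S₂ • e₂`. -/
def PresentedRank3 (E : Type*) [AddCommGroup E] [Module ℂ E]
    [Module (PowerSeries ℂ) E] [IsScalarTower ℂ (PowerSeries ℂ) E]
    (a : E →ₗ[ℂ] E) (l1 l2 l3 : ℂ) (S1 S2 : PowerSeries ℂ) : Prop :=
  ∃ e : Module.Basis (Fin 3) (PowerSeries ℂ) E,
    a (e 0) = l1 • ((X : PowerSeries ℂ) • e 0) ∧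
    a (e 1) = l2 • ((X : PowerSeries ℂ) • e 1) + S1 • e 0 ∧
    a (e 2) = l3 • ((X : PowerSeries ℂ) • e 2) + S2 • e 1

namespace PowerSeries

theorem exists_X_sq_mul_derivative_add_C_mul_X_mul_eq {K : Type*} [Field K] {μ : K}
    (hμ : ∀ n : ℕ, (n : K) + μ ≠ 0) {F : K⟦X⟧} (hF : constantCoeff F = 0) :
    ∃ W : K⟦X⟧, constantCoeff W = coeff 1 F / μ ∧
      X ^ 2 * derivative K W + C μ * (X * W) = F := by
  refine ⟨mk fun n ↦ coeff (n + 1) F / (n + μ), by simp, ?_⟩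
  ext (_ | _ | k)
  · simp [hF, pow_two, mul_assoc]
  · have hμ0 := hμ 0
    simp only [Nat.cast_zero, zero_add] at hμ0
    simp only [pow_two, mul_assoc, map_add, coeff_succ_X_mul, coeff_C_mul, coeff_mk,
      coeff_zero_X_mul, Nat.cast_zero, zero_add]
    field_simp
  · have hμk := hμ (k + 1)
    push_cast at hμk
    simp only [pow_two, mul_assoc, map_add, coeff_succ_X_mul, coeff_C_mul, coeff_mk,
      coeff_derivative]
    push_cast
    field_simp

theorem smul_eq_C_smul {R M : Type*} [CommSemiring R] [AddCommMonoid M] [Module R M]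
    [Module R⟦X⟧ M] [IsScalarTower R R⟦X⟧ M] (c : R) (x : M) : c • x = C c • x := by
  rw [← algebraMap_smul R⟦X⟧ c x, algebraMap_eq]

end PowerSeries

theorem Module.Basis.exists_basis_eq_add_smul {ι R M : Type*} [CommRing R] [AddCommGroup M]
    [Module R M] (e : Module.Basis ι R M) {i₀ : ι} {c : ι → R} (hc : c i₀ = 0) :
    ∃ ε : Module.Basis ι R M, ∀ i, ε i = e i + c i • e i₀ :=
  have h : e.constr R c (e i₀) = 0 := by rw [e.constr_basis, hc]
  ⟨e.map (LinearEquiv.transvection h), fun i ↦ by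
    simp [LinearMap.transvection.apply, e.constr_basis]⟩

theorem natCast_add_ratCast_sub_ne_zero {p q : ℚ} (h : ¬ ∃ m : ℤ, q - p = m) (n : ℕ) :
    (n : ℂ) + ((p : ℂ) - q) ≠ 0 := by
  intro hn
  refine h ⟨n, ?_⟩
  exact_mod_cast (by push_cast; linear_combination -hn : ((q - p : ℚ) : ℂ) = ((n : ℤ) : ℂ))

theorem IsABStructure.apply_add_smul {E : Type*} [AddCommGroup E] [Module ℂ E] [Module ℂ⟦X⟧ E]
    [IsScalarTower ℂ ℂ⟦X⟧ E] {a : E →ₗ[ℂ] E} (ha : IsABStructure E a) {x y z : E} {l m : ℂ}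
    {T W F : ℂ⟦X⟧} (hx : a x = l • ((X : ℂ⟦X⟧) • x)) (hy : a y = m • ((X : ℂ⟦X⟧) • y) + T • z)
    (hW : X ^ 2 * derivative ℂ W + C (l - m) * (X * W) = F) :
    a (y + W • x) = m • ((X : ℂ⟦X⟧) • (y + W • x)) + T • z + F • x := by
  rw [map_add, ha, hx, hy, ← hW, smul_eq_C_smul l, smul_eq_C_smul m, smul_eq_C_smul m, map_sub]
  simp only [smul_add, add_smul, sub_smul, smul_smul, sub_mul]
  ring_nf
  abel

theorem stmt5_general (lam1 lam2 lam3 : ℚ)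
    (h21 : ¬ ∃ m : ℤ, lam2 - lam1 = (m : ℚ))
    (h31 : ¬ ∃ m : ℤ, lam3 - lam1 = (m : ℚ))
    (E : Type*) [AddCommGroup E] [Module ℂ E]
    [Module (PowerSeries ℂ) E] [IsScalarTower ℂ (PowerSeries ℂ) E]
    (a : E →ₗ[ℂ] E) (ha : IsABStructure E a)
    (S1 S2 : PowerSeries ℂ)
    (hS1 : constantCoeff S1 = 1)
    (hE : PresentedRank3 E a (lam1 : ℂ) (lam2 : ℂ) (lam3 : ℂ) S1 S2)
    (γ : ℂ) (hγ : γ = coeff 1 S1) :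
    PresentedRank3 E a (lam1 : ℂ) (lam2 : ℂ) (lam3 : ℂ)
      (1 + C γ * X) S2 := by
  obtain ⟨e, he0, he1, he2⟩ := hE
  obtain ⟨W, hW0, hW⟩ := exists_X_sq_mul_derivative_add_C_mul_X_mul_eq
    (natCast_add_ratCast_sub_ne_zero h21) (F := 1 + C γ * X - S1) (by simp [hS1])
  obtain ⟨V, -, hV⟩ := exists_X_sq_mul_derivative_add_C_mul_X_mul_eq
    (natCast_add_ratCast_sub_ne_zero h31) (F := S2 * W) (by simp [hW0, hγ])
  obtain ⟨ε, hε⟩ := e.exists_basis_eq_add_smul (i₀ := 0) (c := ![0, W, V]) rfl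
  have hε0 : ε 0 = e 0 := by simp [hε]
  have hε1 : ε 1 = e 1 + W • e 0 := hε 1
  have hε2 : ε 2 = e 2 + V • e 0 := hε 2
  refine ⟨ε, hε0 ▸ he0, ?_, ?_⟩
  · rw [hε0, hε1, ha.apply_add_smul he0 he1 hW, add_assoc, ← add_smul, add_sub_cancel]
  · rw [hε1, hε2, ha.apply_add_smul he0 he2 hV, add_assoc, mul_smul, ← smul_add]

/-- If `λ₂ - λ₁ ∉ ℤ` and `λ₃ - λ₁ ∉ ℤ`, a rank-3 fresco
presented by `(λ₁,λ₂,λ₃; S₁,S₂)` admits the presentation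
`(λ₁,λ₂,λ₃; 1 + γ·X, S₂)` where `γ = coeff₁ S₁`. -/
theorem stmt5 (lam1 lam2 lam3 : ℚ)
    (h21 : ¬ ∃ m : ℤ, lam2 - lam1 = (m : ℚ))
    (h31 : ¬ ∃ m : ℤ, lam3 - lam1 = (m : ℚ))
    (E : Type*) [AddCommGroup E] [Module ℂ E]
    [Module (PowerSeries ℂ) E] [IsScalarTower ℂ (PowerSeries ℂ) E]
    (a : E →ₗ[ℂ] E) (ha : IsABStructure E a)
    (S1 S2 : PowerSeries ℂ)
    (hS1 : constantCoeff S1 = 1) (hS2 : constantCoeff S2 = 1)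
    (hE : PresentedRank3 E a (lam1 : ℂ) (lam2 : ℂ) (lam3 : ℂ) S1 S2)
    (γ : ℂ) (hγ : γ = coeff 1 S1) :
    PresentedRank3 E a (lam1 : ℂ) (lam2 : ℂ) (lam3 : ℂ)
      (1 + C γ * X) S2 :=
  stmt5_general lam1 lam2 lam3 h21 h31 E a ha S1 S2 hS1 hE γ hγ
end

section
/- Let λ₁ ∈ ℚ, let p₁ ∈ ℕ with p₁ ≥ 2, set λ₂ := λ₁ + p₁ − 1 and λ₃ := λ₂ (i.e. p₂ = 1), and let β ∈ ℂ with β ≠ 0. Let E be a rank-3 (a,b)-module presented by (λ₁,λ₂,λ₂; S₁, 1 + β·X), where S₁ ∈ ℂ⟦X⟧ has constant term 1. Set α := coeff_{p₁} S₁. Then E also admits the normal-form presentation (λ₁,λ₂,λ₂; 1 + α·X^{p₁}, 1 + β·X). -/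
open PowerSeries

/-!
With `q = p₁ - 1`, so that `λ₂ = λ₁ + q`, look for a new basis
`ε₁ = e₁`, `ε₂ = e₂ + T e₁`, `ε₃ = e₃ + u e₂ + V e₁` with `T, V ∈ ℂ⟦X⟧` and `u ∈ ℂ`.
Since `a (T e₁) = λ₂ X T e₁ + (X²T′ - qXT) e₁`, the required relations become the two
equations `X²T′ - qXT = 1 + αX^{q+1} - S₁` and `X²V′ - qXV = (1 + βX) T - u S₁`.
The operator `W ↦ X²W′ - qXW` multiplies the coefficient of `X^m` by `m - q` and shifts it
to `X^{m+1}`, so each equation is solvable exactly when its right-hand side has vanishing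
coefficients at `X⁰` and `X^{q+1}`. For the first this is the choice of `α`; for the second,
`u = T(0)` kills the constant term, and the free coefficient of `X^q` in `T` (the kernel of the
operator) is tuned, using `β ≠ 0`, to kill the coefficient of `X^{q+1}`.
-/

namespace Module.Basis
variable {ι R M : Type*} [Fintype ι] [DecidableEq ι] [LinearOrder ι] [CommRing R]
  [AddCommGroup M] [Module R M]

theorem isUnit_det_of_unitriangular (e : Basis ι R M) {v : ι → M}
    (hdiag : ∀ i, e.repr (v i) i = 1) (hlt : ∀ i j, j < i → e.repr (v j) i = 0) :
    IsUnit (e.det v) := by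
  have hupper : (e.toMatrix v).IsUpperTriangular := fun i j hij => hlt i j hij
  simp [e.det_apply, Matrix.det_of_isUpperTriangular hupper, toMatrix_apply, hdiag]

theorem exists_coe_eq_of_unitriangular (e : Basis ι R M) {v : ι → M}
    (hdiag : ∀ i, e.repr (v i) i = 1) (hlt : ∀ i j, j < i → e.repr (v j) i = 0) :
    ∃ B : Basis ι R M, ⇑B = v := by
  obtain ⟨hli, hsp⟩ := e.is_basis_iff_det.2 (e.isUnit_det_of_unitriangular hdiag hlt)
  exact ⟨.mk hli hsp.ge, coe_mk _ _⟩

theorem exists_fin_three_unitriangular (e : Basis (Fin 3) R M) (s t u : R) :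
    ∃ B : Basis (Fin 3) R M,
      B 0 = e 0 ∧ B 1 = e 1 + s • e 0 ∧ B 2 = e 2 + t • e 1 + u • e 0 := by
  obtain ⟨B, hB⟩ := e.exists_coe_eq_of_unitriangular
    (v := ![e 0, e 1 + s • e 0, e 2 + t • e 1 + u • e 0])
    (by intro i; fin_cases i <;> simp)
    (by intro i j hij; fin_cases i <;> fin_cases j <;> simp at hij ⊢)
  exact ⟨B, by simp [hB]⟩

end Module.Basis

namespace PowerSeries
variable {K : Type*} [Field K]

/-- `X²W′ - qXW = X^{q+2} (X^{-q} W)′`. -/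
noncomputable def eulerOp (q : ℕ) (W : K⟦X⟧) : K⟦X⟧ :=
  X ^ 2 * derivative K W - C (q : K) * (X * W)

theorem coeff_zero_eulerOp (q : ℕ) (W : K⟦X⟧) : coeff 0 (eulerOp q W) = 0 := by
  simp [eulerOp]

theorem coeff_succ_eulerOp (q m : ℕ) (W : K⟦X⟧) :
    coeff (m + 1) (eulerOp q W) = ((m : K) - q) * coeff m W := by
  rw [eulerOp, map_sub, coeff_X_pow_mul', coeff_C_mul, coeff_succ_X_mul, sub_mul]
  congr 1
  rcases m with _ | m
  · simp
  · rw [if_pos (by omega), show m + 1 + 1 - 2 = m from rfl, coeff_derivative, mul_comm]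
    push_cast; ring

theorem eulerOp_add (q : ℕ) (V W : K⟦X⟧) : eulerOp q (V + W) = eulerOp q V + eulerOp q W := by
  simp only [eulerOp, map_add]; ring

theorem eulerOp_C_mul_X_pow_self (q : ℕ) (c : K) : eulerOp q (C c * X ^ q) = 0 := by
  ext (_ | m)
  · exact coeff_zero_eulerOp q _
  · rw [coeff_succ_eulerOp, coeff_C_mul_X_pow, map_zero]
    split_ifs with h <;> simp [h]

theorem exists_eulerOp_eq [CharZero K] {q : ℕ} {G : K⟦X⟧} (h0 : coeff 0 G = 0)
    (hq : coeff (q + 1) G = 0) : ∃ W, eulerOp q W = G := by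
  refine ⟨mk fun m => coeff (m + 1) G / ((m : K) - q), ?_⟩
  ext (_ | m)
  · rw [coeff_zero_eulerOp, h0]
  · rw [coeff_succ_eulerOp, coeff_mk]
    obtain rfl | hm := eq_or_ne m q
    · simp [hq]
    · exact mul_div_cancel₀ _ (sub_ne_zero.2 (Nat.cast_injective.ne hm))

/-- `T` and `V` are the off-diagonal entries of the change of basis to the normal form. -/
theorem exists_normalizing_gauge [CharZero K] {q : ℕ} (hq : q ≠ 0) {β : K} (hβ : β ≠ 0)
    {S : K⟦X⟧} (hS : constantCoeff S = 1) :
    ∃ T V : K⟦X⟧, eulerOp q T = 1 + C (coeff (q + 1) S) * X ^ (q + 1) - S ∧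
      eulerOp q V = (1 + C β * X) * T - C (coeff 0 T) * S := by
  obtain ⟨T₀, hT₀⟩ := exists_eulerOp_eq (q := q)
    (G := 1 + C (coeff (q + 1) S) * X ^ (q + 1) - S) (by simp [hS]) (by simp [coeff_one])
  set c := (coeff 0 T₀ * coeff (q + 1) S - coeff (q + 1) T₀ - β * coeff q T₀) / β
  set T := T₀ + C c * X ^ q
  have hT : eulerOp q T = eulerOp q T₀ := by
    rw [eulerOp_add, eulerOp_C_mul_X_pow_self, add_zero]
  have hT0 : coeff 0 T = coeff 0 T₀ := by simp [T, hq]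
  have hTq : coeff q T = coeff q T₀ + c := by simp [T]
  have hTq1 : coeff (q + 1) T = coeff (q + 1) T₀ := by simp [T, coeff_X_pow]
  have hG0 : coeff 0 ((1 + C β * X) * T - C (coeff 0 T) * S) = 0 := by simp [hS]
  have hGq : coeff (q + 1) ((1 + C β * X) * T - C (coeff 0 T) * S) = 0 := by
    rw [map_sub, add_mul, one_mul, mul_assoc, map_add, coeff_C_mul, coeff_succ_X_mul,
      coeff_C_mul, hTq, hTq1, hT0]
    simp only [c]
    field_simp
    ring
  obtain ⟨V, hV⟩ := exists_eulerOp_eq hG0 hGq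
  exact ⟨T, V, hT.trans hT₀, hV⟩

end PowerSeries

theorem IsABStructure.apply_smul_of_apply_eq {E : Type*} [AddCommGroup E] [Module ℂ E]
    [Module ℂ⟦X⟧ E] [IsScalarTower ℂ ℂ⟦X⟧ E] {a : E →ₗ[ℂ] E} (ha : IsABStructure E a)
    {e : E} {μ : ℂ} (he : a e = μ • ((X : ℂ⟦X⟧) • e)) (q : ℕ) (T : ℂ⟦X⟧) :
    a (T • e) = (μ + q) • ((X : ℂ⟦X⟧) • (T • e)) + eulerOp q T • e := by
  rw [ha, he, eulerOp, ← algebraMap_smul ℂ⟦X⟧ (μ + q), ← algebraMap_smul ℂ⟦X⟧ μ]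
  simp only [smul_smul, ← add_smul, map_add, map_natCast]
  congr 1
  ring

/-- For `p₁ ≥ 2`, `λ₂ = λ₁ + p₁ - 1`, `λ₃ = λ₂` (i.e. `p₂ = 1`)
and `β ≠ 0`, a rank-3 fresco presented by `(λ₁,λ₂,λ₂; S₁, 1 + β·X)` admits the
normal-form presentation `(λ₁,λ₂,λ₂; 1 + α·X^{p₁}, 1 + β·X)` with
`α = coeff_{p₁} S₁`. -/
theorem stmt7 (lam1 : ℚ) (p1 : ℕ) (hp1 : 2 ≤ p1)
    (lam2 : ℚ) (hlam2 : lam2 = lam1 + p1 - 1)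
    (β : ℂ) (hβ : β ≠ 0)
    (E : Type*) [AddCommGroup E] [Module ℂ E]
    [Module (PowerSeries ℂ) E] [IsScalarTower ℂ (PowerSeries ℂ) E]
    (a : E →ₗ[ℂ] E) (ha : IsABStructure E a)
    (S1 : PowerSeries ℂ) (hS1 : constantCoeff S1 = 1)
    (hE : PresentedRank3 E a (lam1 : ℂ) (lam2 : ℂ) (lam2 : ℂ)
      S1 (1 + C β * X))
    (α : ℂ) (hα : α = coeff p1 S1) :
    PresentedRank3 E a (lam1 : ℂ) (lam2 : ℂ) (lam2 : ℂ)
      (1 + C α * X ^ p1) (1 + C β * X) := by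
  obtain ⟨q, rfl⟩ : ∃ q, p1 = q + 1 := ⟨p1 - 1, by omega⟩
  have hlam : (lam2 : ℂ) = lam1 + q := by rw [hlam2]; push_cast; ring
  obtain ⟨e, he0, he1, he2⟩ := hE
  obtain ⟨T, V, hT, hV⟩ := exists_normalizing_gauge (by omega : q ≠ 0) hβ hS1
  obtain ⟨B, hB0, hB1, hB2⟩ := e.exists_fin_three_unitriangular T (C (coeff 0 T)) V
  refine ⟨B, hB0 ▸ he0, ?_, ?_⟩
  · rw [hB0, hB1, map_add, ha.apply_smul_of_apply_eq he0 q, he1, ← hlam, hT, hα]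
    simp only [smul_add, sub_smul]
    abel
  · rw [hB1, hB2, map_add, map_add, ha.apply_smul_of_apply_eq he0 q, ← hlam, hV, ha, he1, he2,
      derivative_C, mul_zero, zero_smul, add_zero]
    simp only [smul_add, sub_smul, mul_smul]
    rw [smul_comm (C (coeff 0 T)) (lam2 : ℂ), smul_comm (C (coeff 0 T)) (X : ℂ⟦X⟧)]
    abel
end

section
/- Let λ₁ ∈ ℚ, let p₁ ∈ ℕ with p₁ ≥ 2, set λ₂ := λ₁ + p₁ − 1 and λ₃ := λ₂ − 1 (i.e. p₂ = 0). Let E be a rank-3 (a,b)-module presented by (λ₁,λ₂,λ₃; S₁, 1), where S₁ ∈ ℂ⟦X⟧ has constant term 1. Set γ := coeff₁ S₁ and α := coeff_{p₁} S₁. Then E also admits the normal-form presentation (λ₁,λ₂,λ₃; 1 + γ·X + α·X^{p₁}, 1). -/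
open PowerSeries

/-! Keep `e₁` and replace `e₂, e₃` by `e₂ + W e₁, e₃ + R e₁`. Since `a e₁ = λ₁ b e₁`, the Leibniz
rule for `a` turns the new presentation with `S₁` replaced by the normal form `T` into the
equations `X²W' + (λ₁ - λ₂) X W = T - S₁` and `X²R' + (λ₁ - λ₃) X R = W`. In coefficients,
`X²U' + c X U = B` reads `(n + c) uₙ = b_{n+1}`: it is solvable when `b₀ = 0` and `b_{n+1} = 0` at
the resonance `n + c = 0`. For `W` the resonance is `n + 1 = p₁`, where `T` and `S₁` agree by the
choice of `α`; the equation for `R` resonates one step lower, where `W` may be taken to vanish,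
and `w₀ = 0` by the choice of `γ`. -/

namespace PowerSeries

section CommRing

variable {R : Type*} [CommRing R]

noncomputable def twistedDeriv (c : R) (U : R⟦X⟧) : R⟦X⟧ :=
  X ^ 2 * derivative R U + C c * (X * U)

@[simp]
lemma coeff_zero_twistedDeriv (c : R) (U : R⟦X⟧) : coeff 0 (twistedDeriv c U) = 0 := by
  simp [twistedDeriv, pow_two, mul_assoc]

@[simp]
lemma coeff_succ_twistedDeriv (c : R) (U : R⟦X⟧) (n : ℕ) :
    coeff (n + 1) (twistedDeriv c U) = (n + c) * coeff n U := by
  rcases n with _ | n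
  · simp [twistedDeriv, pow_two, mul_assoc, coeff_succ_X_mul]
  · simp [twistedDeriv, pow_two, mul_assoc, coeff_succ_X_mul, coeff_derivative]
    ring

end CommRing

section Field

variable {K : Type*} [Field K]

/-- Solves `twistedDeriv c U = B`; at a resonance `n + c = 0` the junk value `b_{n+1} / 0 = 0`
makes `uₙ = 0`. -/
noncomputable def twistedIntegral (c : K) (B : K⟦X⟧) : K⟦X⟧ :=
  mk fun n => coeff (n + 1) B / (n + c)

lemma coeff_twistedIntegral (c : K) (B : K⟦X⟧) (n : ℕ) :
    coeff n (twistedIntegral c B) = coeff (n + 1) B / (n + c) :=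
  coeff_mk ..

lemma coeff_twistedIntegral_of_add_eq_zero {c : K} (B : K⟦X⟧) {n : ℕ} (hn : (n : K) + c = 0) :
    coeff n (twistedIntegral c B) = 0 := by
  rw [coeff_twistedIntegral, hn, div_zero]

lemma twistedDeriv_twistedIntegral {c : K} {B : K⟦X⟧} (h0 : coeff 0 B = 0)
    (hres : ∀ n : ℕ, (n : K) + c = 0 → coeff (n + 1) B = 0) :
    twistedDeriv c (twistedIntegral c B) = B := by
  ext (_ | n)
  · rw [coeff_zero_twistedDeriv, h0]
  · rw [coeff_succ_twistedDeriv, coeff_twistedIntegral]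
    by_cases hn : (n : K) + c = 0
    · simp [hn, hres n hn]
    · field_simp

end Field

end PowerSeries

lemma Module.Basis.exists_basis_add_smul_zero {R M : Type*} [CommRing R] [AddCommGroup M]
    [Module R M] {n : ℕ} (e : Module.Basis (Fin (n + 1)) R M) (f : Fin (n + 1) → R)
    (hf : f 0 = 0) : ∃ e' : Module.Basis (Fin (n + 1)) R M, ∀ i, e' i = e i + f i • e 0 := by
  let F := e.constr R fun i => e i + f i • e 0
  let G := e.constr R fun i => e i - f i • e 0
  have hF : ∀ i, F (e i) = e i + f i • e 0 := e.constr_basis R _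
  have hG : ∀ i, G (e i) = e i - f i • e 0 := e.constr_basis R _
  have hFG : F ∘ₗ G = LinearMap.id := e.ext fun i => by simp [hF, hG, hf]
  have hGF : G ∘ₗ F = LinearMap.id := e.ext fun i => by simp [hF, hG, hf]
  exact ⟨e.map (LinearEquiv.ofLinearMap F G hFG hGF), fun i => hF i⟩

section ABModule

variable {E : Type*} [AddCommGroup E] [Module ℂ E] [Module ℂ⟦X⟧ E] [IsScalarTower ℂ ℂ⟦X⟧ E]
  {a : E →ₗ[ℂ] E}

lemma IsABStructure.apply_smul_of_eigen (ha : IsABStructure E a) {x : E} {l : ℂ}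
    (hx : a x = l • ((X : ℂ⟦X⟧) • x)) (U : ℂ⟦X⟧) (m : ℂ) :
    a (U • x) = m • ((X : ℂ⟦X⟧) • (U • x)) + twistedDeriv (l - m) U • x := by
  rw [ha, hx, twistedDeriv]
  simp only [← algebraMap_smul ℂ⟦X⟧ l, ← algebraMap_smul ℂ⟦X⟧ m, smul_smul, ← add_smul,
    map_sub]
  congr 1
  simp only [PowerSeries.algebraMap_apply, Algebra.algebraMap_self, RingHom.id_apply]
  ring

theorem PresentedRank3.of_twistedDeriv (ha : IsABStructure E a) {l1 l2 l3 : ℂ}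
    {S1 S2 T W R : ℂ⟦X⟧} (hE : PresentedRank3 E a l1 l2 l3 S1 S2)
    (hW : twistedDeriv (l1 - l2) W = T - S1) (hR : twistedDeriv (l1 - l3) R = S2 * W) :
    PresentedRank3 E a l1 l2 l3 T S2 := by
  obtain ⟨e, he0, he1, he2⟩ := hE
  obtain ⟨e', he'⟩ := e.exists_basis_add_smul_zero ![0, W, R] rfl
  refine ⟨e', ?_, ?_, ?_⟩ <;> simp only [he', Matrix.cons_val_zero, Matrix.cons_val_one,
    Matrix.cons_val_two, Matrix.head_cons, Matrix.tail_cons, zero_smul, add_zero]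
  · exact he0
  · rw [map_add, he1, ha.apply_smul_of_eigen he0 W l2, hW, sub_smul]
    simp only [smul_add]
    abel
  · rw [map_add, he2, ha.apply_smul_of_eigen he0 R l3, hR, mul_smul]
    simp only [smul_add]
    abel

end ABModule

/-- For `p₁ ≥ 2`, `λ₂ = λ₁ + p₁ - 1`, `λ₃ = λ₂ - 1`
(i.e. `p₂ = 0`), a rank-3 fresco presented by `(λ₁,λ₂,λ₃; S₁, 1)` admits the
normal-form presentation `(λ₁,λ₂,λ₃; 1 + γ·X + α·X^{p₁}, 1)` with
`γ = coeff₁ S₁`, `α = coeff_{p₁} S₁`. -/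
theorem stmt8 (lam1 : ℚ) (p1 : ℕ) (hp1 : 2 ≤ p1)
    (lam2 lam3 : ℚ) (hlam2 : lam2 = lam1 + p1 - 1) (hlam3 : lam3 = lam2 - 1)
    (E : Type*) [AddCommGroup E] [Module ℂ E]
    [Module (PowerSeries ℂ) E] [IsScalarTower ℂ (PowerSeries ℂ) E]
    (a : E →ₗ[ℂ] E) (ha : IsABStructure E a)
    (S1 : PowerSeries ℂ) (hS1 : constantCoeff S1 = 1)
    (hE : PresentedRank3 E a (lam1 : ℂ) (lam2 : ℂ) (lam3 : ℂ) S1 1)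
    (γ α : ℂ) (hγ : γ = coeff 1 S1) (hα : α = coeff p1 S1) :
    PresentedRank3 E a (lam1 : ℂ) (lam2 : ℂ) (lam3 : ℂ)
      (1 + C γ * X + C α * X ^ p1) 1 := by
  set T : ℂ⟦X⟧ := 1 + C γ * X + C α * X ^ p1
  have hl2 : (lam2 : ℂ) = lam1 + p1 - 1 := by exact_mod_cast hlam2
  have hl3 : (lam3 : ℂ) = lam2 - 1 := by exact_mod_cast hlam3
  have hB0 : coeff 0 (T - S1) = 0 := by
    simp [T, coeff_zero_eq_constantCoeff_apply, hS1, show p1 ≠ 0 by omega]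
  have hB1 : coeff 1 (T - S1) = 0 := by
    simp [T, hγ, coeff_X_pow, coeff_one, show 1 ≠ p1 by omega]
  have hBp : coeff p1 (T - S1) = 0 := by
    simp [T, hα, coeff_X_pow, coeff_X, coeff_one, show p1 ≠ 0 by omega, show p1 ≠ 1 by omega]
  set W := twistedIntegral ((lam1 : ℂ) - lam2) (T - S1)
  refine hE.of_twistedDeriv ha (W := W) (R := twistedIntegral ((lam1 : ℂ) - lam3) W) ?_ ?_
  · refine twistedDeriv_twistedIntegral hB0 fun n hn => ?_
    have : n + 1 = p1 := by
      rw [hl2] at hn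
      exact_mod_cast (by linear_combination hn : (n : ℂ) + 1 = p1)
    rwa [this]
  · rw [one_mul]
    refine twistedDeriv_twistedIntegral ?_ fun n hn => ?_
    · rw [coeff_twistedIntegral, zero_add, hB1, zero_div]
    · exact coeff_twistedIntegral_of_add_eq_zero _ (by push_cast; linear_combination hn + hl3)
end

section
/- Let M be a ℂ⟦X⟧-module equipped with a ℂ-linear endomorphism a satisfying a(S • x) = S • (a x) + (X² * S′) • x for all S ∈ ℂ⟦X⟧ and x ∈ M. For every polynomial θ ∈ ℂ[Y], define α := θ(a) (evaluation of θ at the endomorphism a) and β : M → M by β(x) := X • (θ′(a)(x)), where θ′ is the derivative of θ. Then α ∘ β − β ∘ α = β ∘ β as ℂ-linear endomorphisms of M. -/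
/-!
With `b` the `ℂ`-linear map `x ↦ X • x`, the hypothesis at `S = X` says `a b - b a = b²`.
In any algebra this relation propagates, one factor of `a` at a time, to
`θ(a) b - b θ(a) = b θ'(a) b` for every polynomial `θ`; applying it to `θ'(a) x` and using that
`θ(a)` and `θ'(a)` commute gives the theorem.
-/

open PowerSeries

namespace Polynomial

variable {R A : Type*} [CommSemiring R] [Semiring A] [Algebra R A] {a b : A}

theorem aeval_mul_X_mul_eq_of_mul_eq_add_mul_self (h : a * b = b * a + b * b) {p : R[X]}
    (hp : aeval a p * b = b * aeval a p + b * aeval a (derivative p) * b) :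
    aeval a (p * X) * b = b * aeval a (p * X) + b * aeval a (derivative (p * X)) * b := by
  simp only [derivative_mul, derivative_X, mul_one, map_add, map_mul, aeval_X]
  set q := aeval a p
  set q' := aeval a (derivative p)
  calc q * a * b = q * b * a + q * b * b := by
        rw [mul_assoc, h, mul_add, ← mul_assoc, ← mul_assoc]
    _ = b * q * a + b * q' * (b * a + b * b) + b * q * b := by
        rw [hp]
        simp only [add_mul, mul_add, mul_assoc]
        abel
    _ = b * (q * a) + b * (q' * a + q) * b := by
        rw [← h]
        simp only [add_mul, mul_add, mul_assoc, add_assoc]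

theorem aeval_mul_eq_of_mul_eq_add_mul_self (h : a * b = b * a + b * b) (p : R[X]) :
    aeval a p * b = b * aeval a p + b * aeval a (derivative p) * b := by
  induction p using Polynomial.induction_on with
  | C c => simp [Algebra.commutes]
  | add p q hp hq => simp only [map_add, add_mul, mul_add, hp, hq]; abel
  | monomial n c ih =>
    rw [pow_succ, ← mul_assoc]
    exact aeval_mul_X_mul_eq_of_mul_eq_add_mul_self h ih

end Polynomial

/-- For an endomorphism `a` of a `ℂ⟦X⟧`-module `M` satisfying
`a (S • x) = S • a x + (X² * S′) • x`, and a polynomial `θ`, setting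
`α := θ(a)` and `β : x ↦ X • θ′(a) x`, one has `α∘β - β∘α = β∘β`. -/
theorem stmt10 (M : Type*) [AddCommGroup M] [Module ℂ M]
    [Module (PowerSeries ℂ) M] [IsScalarTower ℂ (PowerSeries ℂ) M]
    (a : M →ₗ[ℂ] M)
    (ha : ∀ (S : PowerSeries ℂ) (x : M),
      a (S • x) = S • a x + ((X : PowerSeries ℂ) ^ 2 * derivative ℂ S) • x)
    (θ : Polynomial ℂ) :
    ∀ x : M,
      (Polynomial.aeval a θ)
          ((X : PowerSeries ℂ) • (Polynomial.aeval a θ.derivative) x)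
        - (X : PowerSeries ℂ) •
            (Polynomial.aeval a θ.derivative) ((Polynomial.aeval a θ) x)
      = (X : PowerSeries ℂ) •
          (Polynomial.aeval a θ.derivative)
            ((X : PowerSeries ℂ) • (Polynomial.aeval a θ.derivative) x) := by
  intro x
  set b : Module.End ℂ M := DistribSMul.toLinearMap ℂ M (X : PowerSeries ℂ)
  have hab : a * b = b * a + b * b := by
    ext y
    simpa [b, smul_smul, pow_two] using ha X y
  have hθ := congr($(Polynomial.aeval_mul_eq_of_mul_eq_add_mul_self hab θ)
    (Polynomial.aeval a θ.derivative x))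
  have hcomm := congr($(((Commute.all θ θ.derivative).map (Polynomial.aeval a)).eq) x)
  simp only [Module.End.mul_apply, LinearMap.add_apply, b,
    DistribSMul.toLinearMap_apply] at hθ hcomm
  rw [hθ, hcomm, add_sub_cancel_left]
end

section
/- Let M be a ℂ⟦X⟧-module equipped with a ℂ-linear endomorphism a satisfying a(S • x) = S • (a x) + (X² * S′) • x for all S ∈ ℂ⟦X⟧ and x ∈ M. For every polynomial T ∈ ℂ[Y] and every x ∈ M, one has T(a)(X • x) = X • (T(a)(x)) + X • (T′(a)(X • x)), where T(a) and T′(a) denote evaluation of T and its derivative T′ at the endomorphism a. In particular, for every n ∈ ℕ, aⁿ(X • x) = X • (aⁿ x) + n · (X • (aⁿ⁻¹(X • x))). -/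
/-!
Let `b` be multiplication by `X`. The hypothesis at `S = X` says `a * b = b * a + b * b` in
`Module.End ℂ M`, and the theorem holds in any algebra for elements with this relation. By
induction, `a ^ (n + 1) * b = b * a ^ (n + 1) + (n + 1) • (b * a ^ n * b)`: moving `a` past
`b * a ^ n * b` creates the extra terms `b * (b * a ^ n + n • (b * a ^ (n - 1) * b))`, which is
`b * (a ^ n * b)` again. The polynomial identity follows by linearity in `T`.
-/

open PowerSeries

section CommutatorSquare

variable {K R : Type*} [CommSemiring K] [Semiring R] [Algebra K R] {a b : R}

theorem pow_succ_mul_eq_of_mul_eq_add_mul_self (h : a * b = b * a + b * b) (n : ℕ) :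
    a ^ (n + 1) * b = b * a ^ (n + 1) + (n + 1) • (b * a ^ n * b) := by
  induction n with
  | zero => simpa using h
  | succ n ih =>
    calc a ^ (n + 2) * b = a * (a ^ (n + 1) * b) := by rw [pow_succ', mul_assoc]
      _ = (b * a + b * b) * a ^ (n + 1) + (n + 1) • ((b * a + b * b) * a ^ n * b) := by
          rw [ih, mul_add, mul_smul_comm, ← h]; simp only [mul_assoc]
      _ = b * a ^ (n + 2) + (n + 1) • (b * a ^ (n + 1) * b)
            + b * (b * a ^ (n + 1) + (n + 1) • (b * a ^ n * b)) := by
          simp only [add_mul, mul_add, smul_add, mul_smul_comm, mul_assoc, ← pow_succ']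
          abel
      _ = b * a ^ (n + 2) + (n + 2) • (b * a ^ (n + 1) * b) := by
          rw [← ih, add_smul (n + 1) 1, one_smul, mul_assoc b, add_assoc]

theorem pow_mul_eq_of_mul_eq_add_mul_self (h : a * b = b * a + b * b) (n : ℕ) :
    a ^ n * b = b * a ^ n + n • (b * a ^ (n - 1) * b) := by
  cases n with
  | zero => simp
  | succ n => simpa using pow_succ_mul_eq_of_mul_eq_add_mul_self h n

theorem aeval_mul_eq_of_mul_eq_add_mul_self (h : a * b = b * a + b * b) (T : Polynomial K) :
    Polynomial.aeval a T * b
      = b * Polynomial.aeval a T + b * Polynomial.aeval a (Polynomial.derivative T) * b := by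
  induction T using Polynomial.induction_on' with
  | add p q hp hq =>
    simp only [map_add, add_mul, mul_add, hp, hq]
    abel
  | monomial n c =>
    simp only [Polynomial.aeval_monomial, Polynomial.derivative_monomial, map_mul, map_natCast,
      mul_assoc, pow_mul_eq_of_mul_eq_add_mul_self h n, mul_add, nsmul_eq_mul]
    rw [(Nat.cast_commute n b).left_comm, Algebra.left_comm, Algebra.left_comm]

end CommutatorSquare

/-- For an endomorphism `a` of a `ℂ⟦X⟧`-module `M` satisfying
`a (S • x) = S • a x + (X² * S′) • x`, and any polynomial `T`:
`T(a)(X • x) = X • T(a)(x) + X • T′(a)(X • x)`.  In particular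
`aⁿ(X • x) = X • aⁿ x + n • (X • aⁿ⁻¹ (X • x))`. -/
theorem stmt11 (M : Type*) [AddCommGroup M] [Module ℂ M]
    [Module (PowerSeries ℂ) M] [IsScalarTower ℂ (PowerSeries ℂ) M]
    (a : M →ₗ[ℂ] M)
    (ha : ∀ (S : PowerSeries ℂ) (x : M),
      a (S • x) = S • a x + ((X : PowerSeries ℂ) ^ 2 * derivative ℂ S) • x) :
    (∀ (T : Polynomial ℂ) (x : M),
      (Polynomial.aeval a T) ((X : PowerSeries ℂ) • x)
        = (X : PowerSeries ℂ) • (Polynomial.aeval a T) x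
          + (X : PowerSeries ℂ) •
              (Polynomial.aeval a T.derivative) ((X : PowerSeries ℂ) • x))
    ∧
    (∀ (n : ℕ) (x : M),
      (a ^ n) ((X : PowerSeries ℂ) • x)
        = (X : PowerSeries ℂ) • (a ^ n) x
          + n • ((X : PowerSeries ℂ) • (a ^ (n - 1)) ((X : PowerSeries ℂ) • x))) := by
  set b : Module.End ℂ M := DistribSMul.toLinearMap ℂ M (X : PowerSeries ℂ)
  have hab : a * b = b * a + b * b := by
    ext y
    simp [b, DistribSMul.toLinearMap_apply, ha X y, sq, mul_smul]
  refine ⟨fun T x => ?_, fun n x => ?_⟩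
  · simpa [b, DistribSMul.toLinearMap_apply] using
      LinearMap.congr_fun (aeval_mul_eq_of_mul_eq_add_mul_self hab T) x
  · simpa [b, DistribSMul.toLinearMap_apply] using
      LinearMap.congr_fun (pow_mul_eq_of_mul_eq_add_mul_self hab n) x
end

section
/- Let E be a free ℂ⟦X⟧-module of rank k ≥ 1 equipped with an (a,b)-module structure a, and let e ∈ E be such that (e, a e, a² e, …, a^{k−1} e) is a ℂ⟦X⟧-basis of E and a^k e ∈ X • E. Let θ ∈ ℂ[Y] be a polynomial with θ(0) = 0 and θ′(0) ≠ 0, and set α := θ(a). Then (e, α e, α² e, …, α^{k−1} e) is again a ℂ⟦X⟧-basis of E; equivalently, the images of e, α e, …, α^{k−1} e in E⧸(X • E) form a ℂ-basis of E⧸(X • E). -/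
/-!
Reading off constant coefficients of coordinates in the basis `(aⁱ e)` gives `ℂ`-linear forms
`φᵢ : E → ℂ` vanishing on `X • E`. The Leibniz rule gives `a (X • y) = X • (a y + X • y)`, so `a`
preserves `X • E` and `aⁿ e ∈ X • E` for all `n ≥ k`; hence `φᵢ (P(a) e)` is the `i`-th coefficient
of `P`. The matrix of `(θ(a)ʲ e)` modulo `X` is therefore `(coeff i θʲ)`, lower triangular with
diagonal `θ'(0)ʲ` because `X ∣ θ`, so the change-of-basis determinant is a unit of `ℂ⟦X⟧`.
-/

open PowerSeries

namespace Polynomial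

variable {R : Type*} [CommRing R] {θ : R[X]}

theorem coeff_pow_of_lt_of_coeff_zero_eq_zero (hθ0 : θ.coeff 0 = 0) {i j : ℕ} (hij : i < j) :
    (θ ^ j).coeff i = 0 := by
  obtain ⟨q, rfl⟩ := X_dvd_iff.mpr hθ0
  rw [mul_pow, coeff_X_pow_mul', if_neg (by omega)]

theorem coeff_pow_self_of_coeff_zero_eq_zero (hθ0 : θ.coeff 0 = 0) (j : ℕ) :
    (θ ^ j).coeff j = θ.coeff 1 ^ j := by
  obtain ⟨q, rfl⟩ := X_dvd_iff.mpr hθ0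
  rw [mul_pow, coeff_X_pow_mul', if_pos le_rfl, Nat.sub_self, coeff_X_mul,
    ← constantCoeff_apply, ← constantCoeff_apply, map_pow]

theorem det_coeff_pow_ne_zero {K : Type*} [Field K] {θ : K[X]} (hθ0 : θ.coeff 0 = 0)
    (hθ1 : θ.coeff 1 ≠ 0) (k : ℕ) :
    (Matrix.of fun i j : Fin k => (θ ^ (j : ℕ)).coeff i).det ≠ 0 := by
  have hlower : (Matrix.of fun i j : Fin k => (θ ^ (j : ℕ)).coeff i).IsLowerTriangular :=
    fun _ _ hij => coeff_pow_of_lt_of_coeff_zero_eq_zero hθ0 hij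
  rw [Matrix.det_of_isLowerTriangular _ hlower]
  exact Finset.prod_ne_zero_iff.mpr fun j _ => by
    simpa [coeff_pow_self_of_coeff_zero_eq_zero hθ0] using pow_ne_zero _ hθ1

end Polynomial

namespace Module.Basis

theorem constantCoeff_repr_X_smul {R M ι : Type*} [CommRing R] [AddCommGroup M]
    [Module R⟦X⟧ M] (b : Basis ι R⟦X⟧ M) (y : M) (i : ι) :
    constantCoeff (b.repr ((X : R⟦X⟧) • y) i) = 0 := by
  simp

theorem exists_basis_of_det_map_constantCoeff_ne_zero {K M ι : Type*} [Field K]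
    [AddCommGroup M] [Module K⟦X⟧ M] [Fintype ι] [DecidableEq ι] (b : Basis ι K⟦X⟧ M)
    (v : ι → M) (hv : ((b.toMatrix v).map constantCoeff).det ≠ 0) :
    ∃ c : Basis ι K⟦X⟧ M, ⇑c = v := by
  have hdet : IsUnit (b.det v) := by
    rw [det_apply, isUnit_iff_constantCoeff, RingHom.map_det]
    exact hv.isUnit
  obtain ⟨hli, hspan⟩ := (is_basis_iff_det b).mpr hdet
  exact ⟨Basis.mk hli hspan.ge, Basis.coe_mk hli hspan.ge⟩

end Module.Basis

section ABModule

variable {E : Type*} [AddCommGroup E] [Module ℂ E] [Module ℂ⟦X⟧ E]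

/-- The Leibniz rule `a ∘ b - b ∘ a = b²` making `a` an (a,b)-module structure. -/
def IsABModuleStructure (a : E →ₗ[ℂ] E) : Prop :=
  ∀ (S : ℂ⟦X⟧) (x : E), a (S • x) = S • a x + ((X : ℂ⟦X⟧) ^ 2 * derivative ℂ S) • x

variable {a : E →ₗ[ℂ] E}

theorem IsABModuleStructure.apply_X_smul (ha : IsABModuleStructure a) (y : E) :
    a ((X : ℂ⟦X⟧) • y) = (X : ℂ⟦X⟧) • (a y + (X : ℂ⟦X⟧) • y) := by
  rw [ha, derivative_X, mul_one, pow_two, mul_smul, smul_add]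

theorem IsABModuleStructure.exists_pow_apply_eq_X_smul_of_le (ha : IsABModuleStructure a)
    {e : E} {k : ℕ} (hak : ∃ y : E, (a ^ k) e = (X : ℂ⟦X⟧) • y) {n : ℕ} (hn : k ≤ n) :
    ∃ y : E, (a ^ n) e = (X : ℂ⟦X⟧) • y := by
  induction n, hn using Nat.le_induction with
  | base => exact hak
  | succ n _ ih =>
    obtain ⟨y, hy⟩ := ih
    exact ⟨a y + (X : ℂ⟦X⟧) • y, by rw [pow_succ', Module.End.mul_apply, hy, ha.apply_X_smul]⟩

theorem IsABModuleStructure.constantCoeff_repr_pow_apply (ha : IsABModuleStructure a)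
    {k : ℕ} {e : E} {b : Module.Basis (Fin k) ℂ⟦X⟧ E} (hb : ∀ i : Fin k, b i = (a ^ (i : ℕ)) e)
    (hak : ∃ y : E, (a ^ k) e = (X : ℂ⟦X⟧) • y) (m : ℕ) (i : Fin k) :
    constantCoeff (b.repr ((a ^ m) e) i) = if m = i then 1 else 0 := by
  rcases lt_or_ge m k with hm | hm
  · rw [← hb ⟨m, hm⟩, b.repr_self, Finsupp.single_apply]
    simp [Fin.ext_iff, eq_comm]
  · obtain ⟨y, hy⟩ := ha.exists_pow_apply_eq_X_smul_of_le hak hm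
    rw [hy, b.constantCoeff_repr_X_smul, if_neg (by omega)]

theorem IsABModuleStructure.constantCoeff_repr_aeval_apply [IsScalarTower ℂ ℂ⟦X⟧ E]
    (ha : IsABModuleStructure a)
    {k : ℕ} {e : E} {b : Module.Basis (Fin k) ℂ⟦X⟧ E} (hb : ∀ i : Fin k, b i = (a ^ (i : ℕ)) e)
    (hak : ∃ y : E, (a ^ k) e = (X : ℂ⟦X⟧) • y) (p : Polynomial ℂ) (i : Fin k) :
    constantCoeff (b.repr (Polynomial.aeval a p e) i) = p.coeff i := by
  induction p using Polynomial.induction_on' with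
  | add p q hp hq => simp [hp, hq]
  | monomial m c =>
    rw [Polynomial.aeval_monomial, Module.End.mul_apply, Module.algebraMap_end_apply,
      ← LinearEquiv.coe_toLinearMap, LinearMap.map_smul_of_tower, Finsupp.smul_apply]
    simp [ha.constantCoeff_repr_pow_apply hb hak, Polynomial.coeff_monomial]

end ABModule

theorem stmt12_general (k : ℕ)
    (E : Type*) [AddCommGroup E] [Module ℂ E]
    [Module (PowerSeries ℂ) E] [IsScalarTower ℂ (PowerSeries ℂ) E]
    (a : E →ₗ[ℂ] E)
    (ha : ∀ (S : PowerSeries ℂ) (x : E),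
      a (S • x) = S • a x + ((X : PowerSeries ℂ) ^ 2 * derivative ℂ S) • x)
    (e : E) (b : Module.Basis (Fin k) (PowerSeries ℂ) E)
    (hb : ∀ i : Fin k, b i = (a ^ (i : ℕ)) e)
    (hak : ∃ y : E, (a ^ k) e = (X : PowerSeries ℂ) • y)
    (θ : Polynomial ℂ) (hθ0 : θ.coeff 0 = 0) (hθ1 : θ.coeff 1 ≠ 0) :
    ∃ c : Module.Basis (Fin k) (PowerSeries ℂ) E,
      ∀ i : Fin k, c i = ((Polynomial.aeval a θ) ^ (i : ℕ)) e := by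
  have hmatrix : ((b.toMatrix fun j : Fin k => ((Polynomial.aeval a θ) ^ (j : ℕ)) e).map
      constantCoeff) = Matrix.of fun i j : Fin k => (θ ^ (j : ℕ)).coeff i := by
    ext i j
    rw [Matrix.map_apply, Module.Basis.toMatrix_apply, Matrix.of_apply, ← map_pow,
      IsABModuleStructure.constantCoeff_repr_aeval_apply ha hb hak]
  obtain ⟨c, hc⟩ := b.exists_basis_of_det_map_constantCoeff_ne_zero _
    (hmatrix ▸ Polynomial.det_coeff_pow_ne_zero hθ0 hθ1 k)
  exact ⟨c, congrFun hc⟩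

/-- Let `E` be a free `ℂ⟦X⟧`-module of rank `k ≥ 1` with an
(a,b)-module structure `a`, and `e ∈ E` with `(e, a e, …, a^{k-1} e)` a basis
and `a^k e ∈ X • E`.  For any polynomial `θ` with `θ(0) = 0`, `θ′(0) ≠ 0` and
`α := θ(a)`, the family `(e, α e, …, α^{k-1} e)` is again a basis. -/
theorem stmt12 (k : ℕ) (hk : 1 ≤ k)
    (E : Type*) [AddCommGroup E] [Module ℂ E]
    [Module (PowerSeries ℂ) E] [IsScalarTower ℂ (PowerSeries ℂ) E]
    (a : E →ₗ[ℂ] E)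
    (ha : ∀ (S : PowerSeries ℂ) (x : E),
      a (S • x) = S • a x + ((X : PowerSeries ℂ) ^ 2 * derivative ℂ S) • x)
    (e : E) (b : Module.Basis (Fin k) (PowerSeries ℂ) E)
    (hb : ∀ i : Fin k, b i = (a ^ (i : ℕ)) e)
    (hak : ∃ y : E, (a ^ k) e = (X : PowerSeries ℂ) • y)
    (θ : Polynomial ℂ) (hθ0 : θ.coeff 0 = 0) (hθ1 : θ.coeff 1 ≠ 0) :
    ∃ c : Module.Basis (Fin k) (PowerSeries ℂ) E,
      ∀ i : Fin k, c i = ((Polynomial.aeval a θ) ^ (i : ℕ)) e :=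
  stmt12_general k E a ha e b hb hak θ hθ0 hθ1
end

section
/- Let E be an (a,b)-module (a finite-rank free ℂ⟦X⟧-module with an (a,b)-module structure a), let μ ∈ ℂ, and let x₁, …, x_p ∈ E be ℂ-linearly independent elements satisfying a xⱼ = μ • (X • xⱼ) for every j ∈ {1,…,p}. Then x₁, …, x_p are linearly independent over the ring ℂ⟦X⟧. -/
/-!
Put `D = a - μ b`. The Leibniz rule for `a` gives `D (∑ Sⱼ xⱼ) = X² ∑ Sⱼ' xⱼ`, so, `E` being
torsion free, the `ℂ⟦X⟧`-relations among the `xⱼ` are stable under `d/dX`. If `S = c + X V` is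
a relation with `c` constant, then the `(k+1)`-st derivatives `(k+1) V⁽ᵏ⁾ + X V⁽ᵏ⁺¹⁾` of `S` are
relations too, which makes `∑ Vⱼ xⱼ` divisible by every power of `X`; in a free module this
forces `∑ Vⱼ xⱼ = 0`. Hence `∑ cⱼ xⱼ = 0`, so `c = 0` by `ℂ`-independence, and dividing by `X`
and repeating shows that every relation vanishes.
-/

open PowerSeries

namespace PowerSeries

variable {R : Type*} [CommSemiring R]

theorem iterate_derivative_X_mul (f : R⟦X⟧) (k : ℕ) :
    (d⁄dX R)^[k + 1] (X * f) = X * (d⁄dX R)^[k + 1] f + ((k : R) + 1) • (d⁄dX R)^[k] f := by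
  induction k with
  | zero => simp [Derivation.leibniz, add_comm]
  | succ k ih =>
    rw [Function.iterate_succ_apply' _ (k + 1), ih, map_add, Derivation.leibniz,
      Derivation.map_smul, derivative_X, ← Function.iterate_succ_apply' (d⁄dX R),
      ← Function.iterate_succ_apply' (d⁄dX R)]
    simp only [smul_eq_mul, mul_one, Nat.cast_succ, add_smul, one_smul, Nat.succ_eq_add_one]
    abel

theorem eq_zero_of_forall_X_pow_dvd {f : R⟦X⟧} (h : ∀ n, (X : R⟦X⟧) ^ n ∣ f) : f = 0 := by
  ext m
  exact X_pow_dvd_iff.mp (h (m + 1)) m m.lt_succ_self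

theorem eq_zero_of_forall_X_pow_smul_eq {M : Type*} [AddCommMonoid M] [Module R⟦X⟧ M]
    [Module.Free R⟦X⟧ M] {e : M} (h : ∀ n, ∃ u : M, (X : R⟦X⟧) ^ n • u = e) : e = 0 := by
  let b := Module.Free.chooseBasis R⟦X⟧ M
  suffices b.repr e = 0 by simpa using this
  refine Finsupp.ext fun i => eq_zero_of_forall_X_pow_dvd fun n => ?_
  obtain ⟨u, rfl⟩ := h n
  simp

theorem sum_iterate_derivative_smul_eq_zero {M : Type*} [AddCommMonoid M] [Module R⟦X⟧ M]
    {ι : Type*} [Fintype ι] {x : ι → M}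
    (hder : ∀ S : ι → R⟦X⟧, ∑ i, S i • x i = 0 → ∑ i, d⁄dX R (S i) • x i = 0)
    {S : ι → R⟦X⟧} (hS : ∑ i, S i • x i = 0) (k : ℕ) : ∑ i, (d⁄dX R)^[k] (S i) • x i = 0 := by
  induction k with
  | zero => exact hS
  | succ k ih => simpa only [Function.iterate_succ_apply'] using hder _ ih

section DerivationStableRelations

variable {K : Type*} [Field K] {M : Type*} [AddCommGroup M] [Module K M] [Module K⟦X⟧ M]
  [IsScalarTower K K⟦X⟧ M]

theorem sum_derivative_smul_eq_zero_of_apply_eq_smul_X_smul [Module.IsTorsionFree K⟦X⟧ M]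
    {ι : Type*} [Fintype ι] {x : ι → M} (a : M →ₗ[K] M)
    (ha : ∀ (S : K⟦X⟧) (y : M), a (S • y) = S • a y + (X ^ 2 * d⁄dX K S) • y) (μ : K)
    (hx : ∀ i, a (x i) = μ • (X : K⟦X⟧) • x i) {S : ι → K⟦X⟧} (hS : ∑ i, S i • x i = 0) :
    ∑ i, d⁄dX K (S i) • x i = 0 := by
  have key : a (∑ i, S i • x i) =
      μ • (X : K⟦X⟧) • ∑ i, S i • x i + (X ^ 2 : K⟦X⟧) • ∑ i, d⁄dX K (S i) • x i := by
    simp only [map_sum, ha, hx, Finset.smul_sum, Finset.sum_add_distrib, mul_smul,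
      smul_comm (S _) μ, smul_comm (S _) (X : K⟦X⟧)]
  rw [hS, map_zero, smul_zero, smul_zero, zero_add, eq_comm] at key
  exact (smul_eq_zero.mp key).resolve_left (pow_ne_zero 2 X_ne_zero)

variable [Module.Free K⟦X⟧ M] [CharZero K]

theorem eq_zero_of_add_one_smul_add_X_smul_eq_zero {w : ℕ → M}
    (hw : ∀ k : ℕ, ((k : K) + 1) • w k + (X : K⟦X⟧) • w (k + 1) = 0) (k : ℕ) : w k = 0 := by
  suffices ∀ n k, ∃ u : M, (X : K⟦X⟧) ^ n • u = w k from
    eq_zero_of_forall_X_pow_smul_eq (this · k)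
  intro n
  induction n with
  | zero => exact fun k => ⟨w k, one_smul _ _⟩
  | succ n ih =>
    intro k
    obtain ⟨u, hu⟩ := ih (k + 1)
    refine ⟨-(((k : K) + 1)⁻¹ • u), ?_⟩
    have hk : ((k : K) + 1) ≠ 0 := Nat.cast_add_one_ne_zero k
    rw [pow_succ', mul_smul, smul_neg, smul_comm _ ((k : K) + 1)⁻¹, hu, smul_neg,
      smul_comm _ ((k : K) + 1)⁻¹, ← smul_neg, inv_smul_eq_iff₀ hk]
    exact neg_eq_of_add_eq_zero_left (hw k)

variable {ι : Type*} [Fintype ι] {x : ι → M}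

theorem constantCoeff_eq_zero_of_sum_smul_eq_zero
    (hder : ∀ S : ι → K⟦X⟧, ∑ i, S i • x i = 0 → ∑ i, d⁄dX K (S i) • x i = 0)
    (hind : LinearIndependent K x)
    {S : ι → K⟦X⟧} (hS : ∑ i, S i • x i = 0) (i : ι) : constantCoeff (S i) = 0 := by
  obtain ⟨V, hSV⟩ : ∃ V : ι → K⟦X⟧, ∀ i, S i = X * V i + C (constantCoeff (S i)) :=
    ⟨_, fun i => eq_X_mul_shift_add_const (S i)⟩
  have hV : ∑ i, V i • x i = 0 := by
    refine eq_zero_of_add_one_smul_add_X_smul_eq_zero (K := K)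
      (w := fun k => ∑ i, (d⁄dX K)^[k] (V i) • x i) (fun k => ?_) 0
    rw [← sum_iterate_derivative_smul_eq_zero hder hS (k + 1), add_comm, Finset.smul_sum,
      Finset.smul_sum, ← Finset.sum_add_distrib]
    refine Finset.sum_congr rfl fun i _ => ?_
    rw [Function.iterate_succ_apply _ k (S i), hSV i, map_add, derivative_C, add_zero,
      ← Function.iterate_succ_apply, iterate_derivative_X_mul, add_smul (X * _), mul_smul,
      smul_assoc]
  have hc : ∑ i, constantCoeff (S i) • x i = 0 := by
    have : ∑ i, S i • x i = (X : K⟦X⟧) • ∑ i, V i • x i + ∑ i, constantCoeff (S i) • x i := by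
      simp_rw [Finset.smul_sum, ← Finset.sum_add_distrib]
      refine Finset.sum_congr rfl fun i _ => ?_
      conv_lhs => rw [hSV i]
      rw [add_smul, mul_smul]
      exact congrArg _ (algebraMap_smul K⟦X⟧ _ _)
    rwa [hS, hV, smul_zero, zero_add, eq_comm] at this
  exact Fintype.linearIndependent_iff.mp hind _ hc i

theorem linearIndependent_of_derivative_stable
    (hder : ∀ S : ι → K⟦X⟧, ∑ i, S i • x i = 0 → ∑ i, d⁄dX K (S i) • x i = 0)
    (hind : LinearIndependent K x) : LinearIndependent K⟦X⟧ x := by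
  refine Fintype.linearIndependent_iff.mpr fun S hS i => eq_zero_of_forall_X_pow_dvd fun n => ?_
  induction n generalizing S with
  | zero => exact one_dvd _
  | succ n ih =>
    choose T hT using fun j =>
      X_dvd_iff.mpr (constantCoeff_eq_zero_of_sum_smul_eq_zero hder hind hS j)
    have hTx : ∑ j, T j • x j = 0 := by
      refine smul_right_injective M (X_ne_zero (R := K)) ?_
      simp only [Finset.smul_sum, ← mul_smul, ← hT, hS, smul_zero]
    rw [hT i, pow_succ']
    exact mul_dvd_mul_left X (ih T hTx)

end DerivationStableRelations

end PowerSeries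

theorem stmt13_general (E : Type*) [AddCommGroup E] [Module ℂ E]
    [Module (PowerSeries ℂ) E] [IsScalarTower ℂ (PowerSeries ℂ) E]
    [Module.Free (PowerSeries ℂ) E]
    (a : E →ₗ[ℂ] E)
    (ha : ∀ (S : PowerSeries ℂ) (x : E),
      a (S • x) = S • a x + ((X : PowerSeries ℂ) ^ 2 * derivative ℂ S) • x)
    (μ : ℂ) (p : ℕ) (x : Fin p → E)
    (hx : ∀ j : Fin p, a (x j) = μ • ((X : PowerSeries ℂ) • x j))
    (hind : LinearIndependent ℂ x) :
    LinearIndependent (PowerSeries ℂ) x :=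
  linearIndependent_of_derivative_stable
    (fun _ hS => sum_derivative_smul_eq_zero_of_apply_eq_smul_X_smul a ha μ hx hS) hind

/-- In an (a,b)-module `E` (finite-rank free `ℂ⟦X⟧`-module
with an (a,b)-structure `a`), elements `x₁, …, x_p` that are `ℂ`-linearly
independent and satisfy `a xⱼ = μ • (X • xⱼ)` are `ℂ⟦X⟧`-linearly
independent. -/
theorem stmt13 (E : Type*) [AddCommGroup E] [Module ℂ E]
    [Module (PowerSeries ℂ) E] [IsScalarTower ℂ (PowerSeries ℂ) E]
    [Module.Free (PowerSeries ℂ) E] [Module.Finite (PowerSeries ℂ) E]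
    (a : E →ₗ[ℂ] E)
    (ha : ∀ (S : PowerSeries ℂ) (x : E),
      a (S • x) = S • a x + ((X : PowerSeries ℂ) ^ 2 * derivative ℂ S) • x)
    (μ : ℂ) (p : ℕ) (x : Fin p → E)
    (hx : ∀ j : Fin p, a (x j) = μ • ((X : PowerSeries ℂ) • x j))
    (hind : LinearIndependent ℂ x) :
    LinearIndependent (PowerSeries ℂ) x :=
  stmt13_general E a ha μ p x hx hind
end

section
/- Let k ≥ 1, λ₁ ∈ ℂ, and let S₀, …, S_{k−1} and U₀, …, U_{k−1} be formal power series in ℂ⟦X⟧ such that the order (X-adic valuation) of Sⱼ is at least k − j for every j, and such that for every j ∈ {0,…,k−1} the relation U_{k−1}·Sⱼ + X²·Uⱼ′ − λ₁·X·Uⱼ + U_{j−1} = 0 holds, with the convention U_{−1} := 0. Then for every j ∈ {0,…,k−1} the order of Uⱼ is at least k − j − 1. -/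
/-!
Reading the relation for `j + 1` backwards expresses `U j` through `U (j + 1)` and `S (j + 1)`:
`U j = λ₁ X U_{j+1} - U_{k-1} S_{j+1} - X² U_{j+1}′`. Since `X f′` has order at least that of
`f`, every term on the right gains one order over `U (j + 1)`, so a downward induction on `j`,
starting from the trivial bound `0` at `j = k - 1`, gives the claim.
-/

open PowerSeries

namespace PowerSeries

section Semiring

variable {R : Type*} [Semiring R]

theorem le_order_add {φ ψ : R⟦X⟧} {n : ℕ∞} (hφ : n ≤ φ.order) (hψ : n ≤ ψ.order) :
    n ≤ (φ + ψ).order :=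
  (le_min hφ hψ).trans (min_order_le_order_add φ ψ)

theorem le_order_X_mul {φ : R⟦X⟧} {n : ℕ∞} (h : n ≤ φ.order) :
    n + 1 ≤ (X * φ).order := by
  refine le_order _ _ fun i hi => ?_
  cases i with
  | zero => exact coeff_zero_X_mul _
  | succ i =>
    rw [coeff_succ_X_mul]
    exact coeff_of_lt_order _ ((WithTop.add_lt_add_iff_right ENat.one_ne_top).mp hi |>.trans_le h)

end Semiring

theorem le_order_sub {R : Type*} [Ring R] {φ ψ : R⟦X⟧} {n : ℕ∞}
    (hφ : n ≤ φ.order) (hψ : n ≤ ψ.order) : n ≤ (φ - ψ).order :=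
  sub_eq_add_neg φ ψ ▸ le_order_add hφ (order_neg ψ ▸ hψ)

theorem order_le_order_X_mul_derivative {R : Type*} [CommSemiring R] (f : R⟦X⟧) :
    f.order ≤ (X * derivative R f).order := by
  refine le_order _ _ fun i hi => ?_
  cases i with
  | zero => exact coeff_zero_X_mul _
  | succ i => rw [coeff_succ_X_mul, coeff_derivative, coeff_of_lt_order _ hi, zero_mul]

end PowerSeries

theorem succ_le_order_of_relation {R : Type*} [CommRing R] {a b s u : R⟦X⟧} (c : R) {n : ℕ∞}
    (hu : n ≤ u.order) (hs : n + 1 ≤ s.order)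
    (h : a * s + X ^ 2 * derivative R u - c • (X * u) + b = 0) :
    n + 1 ≤ b.order := by
  have hb : b = c • (X * u) - a * s - X * (X * derivative R u) := by
    linear_combination h
  have has : n + 1 ≤ (a * s).order :=
    (le_add_left hs).trans (le_order_mul a s)
  have hXu : n + 1 ≤ (X * u).order := le_order_X_mul hu
  have hXXu : n + 1 ≤ (X * (X * derivative R u)).order :=
    le_order_X_mul (hu.trans (order_le_order_X_mul_derivative u))
  rw [hb]
  exact le_order_sub (le_order_sub (hXu.trans le_order_smul) has) hXXu

theorem stmt18_general (k : ℕ) (lam1 : ℂ)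
    (S U : ℕ → PowerSeries ℂ)
    (hS : ∀ j < k, ((k - j : ℕ) : ℕ∞) ≤ (S j).order)
    (hrel : ∀ j < k,
      U (k - 1) * S j + (X : PowerSeries ℂ) ^ 2 * derivative ℂ (U j)
        - lam1 • ((X : PowerSeries ℂ) * U j)
        + (if j = 0 then 0 else U (j - 1)) = 0) :
    ∀ j < k, ((k - j - 1 : ℕ) : ℕ∞) ≤ (U j).order := by
  suffices h : ∀ i j, j + i + 1 = k → (i : ℕ∞) ≤ (U j).order from
    fun j hj => h _ j (by omega)
  intro i
  induction i with
  | zero => simp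
  | succ i ih =>
    intro j hj
    have hrel' := hrel (j + 1) (by omega)
    rw [if_neg j.succ_ne_zero, Nat.add_sub_cancel] at hrel'
    have hS' := hS (j + 1) (by omega)
    rw [show k - (j + 1) = i + 1 by omega, Nat.cast_succ] at hS'
    exact_mod_cast succ_le_order_of_relation lam1 (ih (j + 1) (by omega)) hS' hrel'

/-- Let `k ≥ 1`, `λ₁ ∈ ℂ` and `S₀,…,S_{k-1}`,
`U₀,…,U_{k-1} ∈ ℂ⟦X⟧` with `order Sⱼ ≥ k - j` and
`U_{k-1}·Sⱼ + X²·Uⱼ′ - λ₁·X·Uⱼ + U_{j-1} = 0` (convention `U_{-1} = 0`).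
Then `order Uⱼ ≥ k - j - 1` for every `j < k`. -/
theorem stmt18 (k : ℕ) (hk : 1 ≤ k) (lam1 : ℂ)
    (S U : ℕ → PowerSeries ℂ)
    (hS : ∀ j < k, ((k - j : ℕ) : ℕ∞) ≤ (S j).order)
    (hrel : ∀ j < k,
      U (k - 1) * S j + (X : PowerSeries ℂ) ^ 2 * derivative ℂ (U j)
        - lam1 • ((X : PowerSeries ℂ) * U j)
        + (if j = 0 then 0 else U (j - 1)) = 0) :
    ∀ j < k, ((k - j - 1 : ℕ) : ℕ∞) ≤ (U j).order :=
  stmt18_general k lam1 S U hS hrel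
end
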